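/- arXiv:2207.03837 — 10 statements merged into one kernel-verified Lean document; each statement's English description precedes it below -/
import Mathlib

section
/- With Horner's perturbed recursion, the computed value satisfies the exact error expansion fl(P(x)) − P(x) = Σ_{i=0}^{n} a_i x^i (φ_i − 1), where φ_i = Π_{k=2n−2i}^{2n} (1+δ_k) for 0 ≤ i ≤ n−1 and φ_n = Π_{k=1}^{2n} (1+δ_k). -/
/-!
Unrolling the perturbed recursion two steps at a time, the coefficient `a_i` enters at step
`2(n - i)` (the rounded addition) and is then multiplied by `x` and by every later rounding
factor, so it contributes `a_i x^i ∏_{k ≥ 2n - 2i} (1 + δ_k)`; the leading coefficient `a_n` is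
never added and collects the factors from `k = 1` on. Subtracting `P(x)` term by term gives the
expansion.
-/

open Finset

theorem Finset.prod_Icc_add_two_top {M : Type*} [CommMonoid M] {lo m : ℕ} (h : lo ≤ m + 1)
    (f : ℕ → M) : ∏ k ∈ Icc lo (m + 2), f k = (∏ k ∈ Icc lo m, f k) * (f (m + 1) * f (m + 2)) := by
  rw [prod_Icc_succ_top (by omega), prod_Icc_succ_top h, mul_assoc]

/-- `c m` is the coefficient added at step `m` (so `c m = a_{n-m}`), `g k` the rounding factor of
the `k`-th operation. -/
theorem eq_sum_of_perturbed_horner {R : Type*} [CommRing R] (x : R) (c g s : ℕ → R) (N : ℕ)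
    (h0 : s 0 = c 0)
    (hrec : ∀ m < N, s (m + 1) = (s m * x * g (2 * m + 1) + c (m + 1)) * g (2 * m + 2)) :
    s N = ∑ j ∈ range (N + 1), c (N - j) * x ^ j *
      ∏ k ∈ Icc (max 1 (2 * N - 2 * j)) (2 * N), g k := by
  induction N with
  | zero => simp [h0]
  | succ m ih =>
    have hterm : ∀ j ∈ range (m + 1),
        c (m + 1 - (j + 1)) * x ^ (j + 1) *
          ∏ k ∈ Icc (max 1 (2 * m + 2 - 2 * (j + 1))) (2 * m + 2), g k
        = (c (m - j) * x ^ j * ∏ k ∈ Icc (max 1 (2 * m - 2 * j)) (2 * m), g k) *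
          (x * (g (2 * m + 1) * g (2 * m + 2))) := by
      intro j _
      rw [show 2 * m + 2 - 2 * (j + 1) = 2 * m - 2 * j by omega, Nat.add_sub_add_right,
        prod_Icc_add_two_top (by omega)]
      ring
    have hlast : max 1 (2 * m + 2 - 2 * 0) = 2 * m + 2 := max_eq_right (by omega)
    rw [hrec m (by omega), ih fun k hk => hrec k (by omega), show 2 * (m + 1) = 2 * m + 2 by omega,
      sum_range_succ' _ (m + 1), sum_congr rfl hterm, ← sum_mul, hlast, Icc_self, prod_singleton,
      Nat.sub_zero]
    ring

theorem stmt_7_general (n : ℕ) (x : ℝ) (a : ℕ → ℝ) (δ : ℕ → ℝ)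
    (rhat : ℕ → ℝ) (h0 : rhat 0 = a n)
    (hodd : ∀ k, 1 ≤ k → k ≤ n →
      rhat (2 * k - 1) = rhat (2 * k - 2) * x * (1 + δ (2 * k - 1)))
    (heven : ∀ k, 1 ≤ k → k ≤ n →
      rhat (2 * k) = (rhat (2 * k - 1) + a (n - k)) * (1 + δ (2 * k))) :
    rhat (2 * n) - ∑ i ∈ Finset.range (n + 1), a i * x ^ i
      = ∑ i ∈ Finset.range (n + 1), a i * x ^ i *
          ((∏ k ∈ Finset.Icc (max 1 (2 * n - 2 * i)) (2 * n), (1 + δ k)) - 1) := by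
  have hrec : ∀ m < n, rhat (2 * (m + 1)) =
      (rhat (2 * m) * x * (1 + δ (2 * m + 1)) + a (n - (m + 1))) * (1 + δ (2 * m + 2)) := by
    intro m hm
    have hodd' := hodd (m + 1) (by omega) (by omega)
    have heven' := heven (m + 1) (by omega) (by omega)
    rw [show 2 * (m + 1) - 1 = 2 * m + 1 by omega, show 2 * (m + 1) - 2 = 2 * m by omega] at hodd'
    rw [show 2 * (m + 1) - 1 = 2 * m + 1 by omega] at heven'
    rw [heven', hodd', show 2 * (m + 1) = 2 * m + 2 by omega]
  have hclosed := eq_sum_of_perturbed_horner x (fun i => a (n - i)) (fun k => 1 + δ k)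
    (fun m => rhat (2 * m)) n (by simpa using h0) hrec
  rw [hclosed, ← sum_sub_distrib]
  refine sum_congr rfl fun i hi => ?_
  rw [Nat.sub_sub_self (Nat.lt_succ_iff.mp (mem_range.mp hi))]
  ring

/-- Exact error expansion for Horner's perturbed recursion:
`fl(P(x)) − P(x) = Σ_{i=0}^n a_i x^i (φ_i − 1)` where
`φ_i = Π_{k=2n−2i}^{2n} (1+δ_k)` for `i ≤ n−1` and `φ_n = Π_{k=1}^{2n} (1+δ_k)`
(both covered by the lower index `max 1 (2n−2i)`). -/
theorem stmt_7 (n : ℕ) (hn : 1 ≤ n) (x : ℝ) (a : ℕ → ℝ) (u : ℝ) (hu : 0 < u)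
    (δ : ℕ → ℝ) (hδ : ∀ k, 1 ≤ k → k ≤ 2 * n → |δ k| ≤ u)
    (rhat : ℕ → ℝ) (h0 : rhat 0 = a n)
    (hodd : ∀ k, 1 ≤ k → k ≤ n →
      rhat (2 * k - 1) = rhat (2 * k - 2) * x * (1 + δ (2 * k - 1)))
    (heven : ∀ k, 1 ≤ k → k ≤ n →
      rhat (2 * k) = (rhat (2 * k - 1) + a (n - k)) * (1 + δ (2 * k))) :
    rhat (2 * n) - ∑ i ∈ Finset.range (n + 1), a i * x ^ i
      = ∑ i ∈ Finset.range (n + 1), a i * x ^ i *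
          ((∏ k ∈ Finset.Icc (max 1 (2 * n - 2 * i)) (2 * n), (1 + δ k)) - 1) :=
  stmt_7_general n x a δ rhat h0 hodd heven
end

section
/- With Horner's perturbed recursion, the absolute forward error satisfies the deterministic bound |fl(P(x)) − P(x)| ≤ (Σ_{i=0}^{n} |a_i x^i|)·γ_{2n}, where γ_{2n} = (1+u)^{2n} − 1. -/
/-- Deterministic forward error bound for Horner's perturbed
recursion: `|fl(P(x)) − P(x)| ≤ (Σ_{i=0}^n |a_i x^i|)·γ_{2n}` where
`γ_{2n} = (1+u)^{2n} − 1`. -/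
theorem stmt_8 (n : ℕ) (hn : 1 ≤ n) (x : ℝ) (a : ℕ → ℝ) (u : ℝ) (hu : 0 < u)
    (δ : ℕ → ℝ) (hδ : ∀ k, 1 ≤ k → k ≤ 2 * n → |δ k| ≤ u)
    (rhat : ℕ → ℝ) (h0 : rhat 0 = a n)
    (hodd : ∀ k, 1 ≤ k → k ≤ n →
      rhat (2 * k - 1) = rhat (2 * k - 2) * x * (1 + δ (2 * k - 1)))
    (heven : ∀ k, 1 ≤ k → k ≤ n →
      rhat (2 * k) = (rhat (2 * k - 1) + a (n - k)) * (1 + δ (2 * k))) :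
    |rhat (2 * n) - ∑ i ∈ Finset.range (n + 1), a i * x ^ i|
      ≤ (∑ i ∈ Finset.range (n + 1), |a i * x ^ i|) * ((1 + u) ^ (2 * n) - 1) := by
  have hu0 : (0:ℝ) ≤ u := hu.le
  have key : ∀ m, m ≤ n →
      |rhat (2*m) - ∑ i ∈ Finset.range (m+1), a (n - m + i) * x ^ i|
        ≤ (∑ i ∈ Finset.range (m+1), |a (n - m + i) * x ^ i|) * ((1+u)^(2*m) - 1) := by
    intro m
    induction m with
    | zero =>
      intro _
      simp [h0]
    | succ m ih =>
      intro hm1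
      have hmn : m ≤ n := Nat.le_of_succ_le hm1
      have ihm := ih hmn
      set P := ∑ i ∈ Finset.range (m+1), a (n - m + i) * x ^ i with hP
      set S := ∑ i ∈ Finset.range (m+1), |a (n - m + i) * x ^ i| with hS
      have hS0 : 0 ≤ S := Finset.sum_nonneg fun i _ => abs_nonneg _
      have hPS : |P| ≤ S := Finset.abs_sum_le_sum_abs _ _
      have e1 : rhat (2*(m+1)-1) = rhat (2*m) * x * (1 + δ (2*(m+1)-1)) := by
        have h := hodd (m+1) (Nat.succ_le_succ (Nat.zero_le m)) hm1
        have h2 : 2*(m+1)-2 = 2*m := by omega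
        rwa [h2] at h
      have e2 : rhat (2*(m+1)) = (rhat (2*(m+1)-1) + a (n - (m+1))) * (1 + δ (2*(m+1))) :=
        heven (m+1) (Nat.succ_le_succ (Nat.zero_le m)) hm1
      have hd1 : |δ (2*(m+1)-1)| ≤ u := hδ _ (by omega) (by omega)
      have hd2 : |δ (2*(m+1))| ≤ u := hδ _ (by omega) (by omega)
      set d1 := δ (2*(m+1)-1) with hd1def
      set d2 := δ (2*(m+1)) with hd2def
      set r := rhat (2*m) with hrdef
      set a' := a (n - (m+1)) with ha'def
      have hsum : ∑ i ∈ Finset.range (m+1+1), a (n - (m+1) + i) * x ^ i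
          = a' + x * P := by
        rw [Finset.sum_range_succ']
        simp only [pow_zero, mul_one, hP, Finset.mul_sum]
        rw [add_comm]
        congr 1
        apply Finset.sum_congr rfl
        intro i _
        have hidx : n - (m+1) + (i+1) = n - m + i := by omega
        rw [hidx]; ring
      have hsumabs : ∑ i ∈ Finset.range (m+1+1), |a (n - (m+1) + i) * x ^ i|
          = |a'| + |x| * S := by
        rw [Finset.sum_range_succ']
        simp only [pow_zero, mul_one, hS, Finset.mul_sum]
        rw [add_comm]
        congr 1
        apply Finset.sum_congr rfl
        intro i _
        have hidx : n - (m+1) + (i+1) = n - m + i := by omega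
        rw [hidx, show a (n - m + i) * x ^ (i+1) = x * (a (n - m + i) * x ^ i) by ring,
          abs_mul]
      rw [e2, e1, hsum, hsumabs]
      have habs1 : |1+d1| ≤ 1+u := (abs_add_le 1 d1).trans (by simp [hd1])
      have habs2 : |1+d2| ≤ 1+u := (abs_add_le 1 d2).trans (by simp [hd2])
      have decomp : (r*x*(1+d1) + a')*(1+d2) - (a' + x*P)
          = (r - P)*(x*((1+d1)*(1+d2))) + P*x*((1+d1)*(1+d2)-1) + a'*d2 := by ring
      have hmid : |(1+d1)*(1+d2)-1| ≤ (1+u)^2 - 1 := by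
        have : (1+d1)*(1+d2)-1 = d1 + d2 + d1*d2 := by ring
        rw [this]
        calc |d1 + d2 + d1*d2| ≤ |d1| + |d2| + |d1| * |d2| := by
              refine (abs_add_le _ _).trans (add_le_add (abs_add_le _ _) ?_)
              rw [abs_mul]
          _ ≤ u + u + u*u := by
              have h12 := mul_le_mul hd1 hd2 (abs_nonneg _) hu0
              linarith
          _ = (1+u)^2 - 1 := by ring
      have hg1 : (1:ℝ) ≤ (1+u)^(2*m) := one_le_pow₀ (by linarith)
      have hx0 : (0:ℝ) ≤ |x| := abs_nonneg _
      have t1 : |(r - P)*(x*((1+d1)*(1+d2)))|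
          ≤ (S * ((1+u)^(2*m) - 1)) * (|x| * ((1+u)*(1+u))) := by
        rw [abs_mul, abs_mul, abs_mul]
        have h2 : |1+d1| * |1+d2| ≤ (1+u)*(1+u) :=
          mul_le_mul habs1 habs2 (abs_nonneg _) (by linarith)
        have h3 : |x| * (|1+d1| * |1+d2|) ≤ |x| * ((1+u)*(1+u)) :=
          mul_le_mul_of_nonneg_left h2 hx0
        exact mul_le_mul ihm h3 (by positivity)
          (mul_nonneg hS0 (by linarith))
      have t2 : |P*x*((1+d1)*(1+d2)-1)| ≤ S * |x| * ((1+u)^2 - 1) := by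
        rw [abs_mul, abs_mul]
        exact mul_le_mul (mul_le_mul hPS le_rfl hx0 hS0) hmid (abs_nonneg _)
          (mul_nonneg hS0 hx0)
      have t3 : |a'*d2| ≤ |a'| * u := by
        rw [abs_mul]; exact mul_le_mul_of_nonneg_left hd2 (abs_nonneg _)
      calc |(r*x*(1+d1) + a')*(1+d2) - (a' + x*P)|
          ≤ |(r - P)*(x*((1+d1)*(1+d2)))| + |P*x*((1+d1)*(1+d2)-1)| + |a'*d2| := by
            rw [decomp]
            exact (abs_add_le _ _).trans (add_le_add_left (abs_add_le _ _) _)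
        _ ≤ (S * ((1+u)^(2*m) - 1)) * (|x| * ((1+u)*(1+u))) + S * |x| * ((1+u)^2 - 1)
              + |a'| * u := add_le_add (add_le_add t1 t2) t3
        _ ≤ (|a'| + |x| * S) * ((1+u)^(2*(m+1)) - 1) := by
            have hpow : (1+u)^(2*(m+1)) = (1+u)^(2*m) * ((1+u)*(1+u)) := by
              rw [show 2*(m+1) = 2*m + 1 + 1 by ring, pow_succ, pow_succ]; ring
            rw [hpow]
            have ha0 : (0:ℝ) ≤ |a'| := abs_nonneg _
            have hx0 : (0:ℝ) ≤ |x| := abs_nonneg _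
            nlinarith [mul_nonneg hS0 hx0, mul_nonneg ha0 hu0,
              mul_nonneg (mul_nonneg hS0 hx0) hu0,
              mul_nonneg ha0 (mul_nonneg hu0 hu0),
              mul_nonneg (mul_nonneg ha0 hu0) (sub_nonneg.mpr hg1),
              mul_nonneg (mul_nonneg (mul_nonneg ha0 hu0) hu0) (sub_nonneg.mpr hg1)]
  have h := key n le_rfl
  simpa using h
end

section
/- With Horner's perturbed recursion and assuming P(x) ≠ 0, the relative forward error satisfies the deterministic bound |fl(P(x)) − P(x)| / |P(x)| ≤ cond_1(P,x)·γ_{2n}, where cond_1(P,x) = (Σ_{i=0}^{n} |a_i x^i|)/|P(x)| and γ_{2n} = (1+u)^{2n} − 1. -/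
/-!
Let `S_k` be the exact Horner iterate after `k` steps and `T_k` the iterate for `|a_i|` and `|x|`,
so that `|S_k| ≤ T_k`. One perturbed step `r ↦ (r x (1 + δ) + c)(1 + δ')` multiplies the
previous error by at most `|x|(1 + u)²`, contributes `|S_k x| ((1 + u)² - 1)` from rounding the
exact value and `|c| u` from the addition; hence `|r̂_{2k} - S_k| ≤ γ_{2k} T_k` by induction,
and dividing by `|P(x)|` at `k = n` gives the bound.
-/

/-- Horner's scheme fed with the coefficients `c 0, c 1, …`, leading coefficient first. -/
def horner (c : ℕ → ℝ) (x : ℝ) : ℕ → ℝ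
  | 0 => c 0
  | k + 1 => horner c x k * x + c (k + 1)

theorem horner_eq_sum (c : ℕ → ℝ) (x : ℝ) (k : ℕ) :
    horner c x k = ∑ i ∈ Finset.range (k + 1), c (k - i) * x ^ i := by
  induction k with
  | zero => simp [horner]
  | succ k ih =>
    rw [Finset.sum_range_succ', horner, ih, Finset.sum_mul]
    simp [pow_succ, mul_assoc]

theorem horner_rev_eq_sum (a : ℕ → ℝ) (x : ℝ) (n : ℕ) :
    horner (fun j => a (n - j)) x n = ∑ i ∈ Finset.range (n + 1), a i * x ^ i := by
  rw [horner_eq_sum]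
  refine Finset.sum_congr rfl fun i hi => ?_
  rw [Nat.sub_sub_self (Nat.lt_succ_iff.mp (Finset.mem_range.mp hi))]

theorem abs_horner_le (c : ℕ → ℝ) (x : ℝ) (k : ℕ) :
    |horner c x k| ≤ horner (fun j => |c j|) |x| k := by
  induction k with
  | zero => exact le_rfl
  | succ k ih =>
    calc |horner c x k * x + c (k + 1)| ≤ |horner c x k| * |x| + |c (k + 1)| := by
          rw [← abs_mul]; exact abs_add_le _ _
      _ ≤ horner (fun j => |c j|) |x| k * |x| + |c (k + 1)| := by gcongr

theorem abs_one_add_mul_one_add_sub_one_le {d₁ d₂ u : ℝ} (hd₁ : |d₁| ≤ u) (hd₂ : |d₂| ≤ u) :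
    |(1 + d₁) * (1 + d₂) - 1| ≤ (1 + u) ^ 2 - 1 := by
  have hu : 0 ≤ u := (abs_nonneg _).trans hd₁
  calc |(1 + d₁) * (1 + d₂) - 1| = |d₁ + d₂ + d₁ * d₂| := by ring_nf
    _ ≤ |d₁| + |d₂| + |d₁| * |d₂| := by
        rw [← abs_mul]; exact (abs_add_le _ _).trans (by gcongr; exact abs_add_le _ _)
    _ ≤ u + u + u * u := by gcongr
    _ = (1 + u) ^ 2 - 1 := by ring

theorem abs_perturbed_step_sub_le {r s t y c d₁ d₂ g u : ℝ} (hrs : |r - s| ≤ g * t)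
    (hst : |s| ≤ t) (hg : 0 ≤ g) (hd₁ : |d₁| ≤ u) (hd₂ : |d₂| ≤ u) :
    |(r * y * (1 + d₁) + c) * (1 + d₂) - (s * y + c)|
      ≤ ((1 + g) * (1 + u) ^ 2 - 1) * (t * |y| + |c|) := by
  have hu : 0 ≤ u := (abs_nonneg _).trans hd₁
  have h_one_add {d : ℝ} (hd : |d| ≤ u) : |1 + d| ≤ 1 + u :=
    (abs_add_le _ _).trans (by rw [abs_one]; linarith)
  have hprod : |(1 + d₁) * (1 + d₂)| ≤ (1 + u) ^ 2 := by
    rw [abs_mul, sq]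
    exact mul_le_mul (h_one_add hd₁) (h_one_add hd₂) (abs_nonneg _) (by linarith)
  have hround := abs_one_add_mul_one_add_sub_one_le hd₁ hd₂
  have hu_le : u ≤ (1 + g) * (1 + u) ^ 2 - 1 := by nlinarith
  calc |(r * y * (1 + d₁) + c) * (1 + d₂) - (s * y + c)|
        = |(r - s) * y * ((1 + d₁) * (1 + d₂)) + s * y * ((1 + d₁) * (1 + d₂) - 1)
            + c * d₂| := by ring_nf
    _ ≤ |r - s| * |y| * |(1 + d₁) * (1 + d₂)| + |s| * |y| * |(1 + d₁) * (1 + d₂) - 1|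
          + |c| * |d₂| := by
        simp only [← abs_mul]
        exact (abs_add_le _ _).trans (by gcongr; exact abs_add_le _ _)
    _ ≤ g * t * |y| * (1 + u) ^ 2 + t * |y| * ((1 + u) ^ 2 - 1) + |c| * u := by
        have : 0 ≤ g * t := (abs_nonneg _).trans hrs
        have : 0 ≤ t * |y| := mul_nonneg ((abs_nonneg _).trans hst) (abs_nonneg _)
        gcongr
    _ = ((1 + g) * (1 + u) ^ 2 - 1) * (t * |y|) + |c| * u := by ring
    _ ≤ ((1 + g) * (1 + u) ^ 2 - 1) * (t * |y|) + |c| * ((1 + g) * (1 + u) ^ 2 - 1) := by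
        gcongr
    _ = ((1 + g) * (1 + u) ^ 2 - 1) * (t * |y| + |c|) := by ring

theorem abs_sub_horner_le {n : ℕ} {c δ r : ℕ → ℝ} {x u : ℝ}
    (hδ : ∀ k, 1 ≤ k → k ≤ 2 * n → |δ k| ≤ u) (h0 : r 0 = c 0)
    (hstep : ∀ k < n, r (k + 1) = (r k * x * (1 + δ (2 * k + 1)) + c (k + 1)) * (1 + δ (2 * k + 2)))
    {k : ℕ} (hk : k ≤ n) :
    |r k - horner c x k| ≤ ((1 + u) ^ (2 * k) - 1) * horner (fun j => |c j|) |x| k := by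
  induction k with
  | zero => simp [h0, horner]
  | succ k ih =>
    have hd₁ := hδ (2 * k + 1) (by omega) (by omega)
    have hd₂ := hδ (2 * k + 2) (by omega) (by omega)
    have hg : 0 ≤ (1 + u) ^ (2 * k) - 1 :=
      sub_nonneg.mpr (one_le_pow₀ (by linarith [(abs_nonneg _).trans hd₁]))
    have hγ : (1 + ((1 + u) ^ (2 * k) - 1)) * (1 + u) ^ 2 - 1 = (1 + u) ^ (2 * (k + 1)) - 1 := by
      ring
    rw [hstep k hk, horner, horner, ← hγ]
    exact abs_perturbed_step_sub_le (ih (by omega)) (abs_horner_le c x k) hg hd₁ hd₂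

theorem stmt_9_general (n : ℕ) (x : ℝ) (a : ℕ → ℝ) (u : ℝ)
    (δ : ℕ → ℝ) (hδ : ∀ k, 1 ≤ k → k ≤ 2 * n → |δ k| ≤ u)
    (rhat : ℕ → ℝ) (h0 : rhat 0 = a n)
    (hodd : ∀ k, 1 ≤ k → k ≤ n →
      rhat (2 * k - 1) = rhat (2 * k - 2) * x * (1 + δ (2 * k - 1)))
    (heven : ∀ k, 1 ≤ k → k ≤ n →
      rhat (2 * k) = (rhat (2 * k - 1) + a (n - k)) * (1 + δ (2 * k))) :
    |rhat (2 * n) - ∑ i ∈ Finset.range (n + 1), a i * x ^ i|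
        / |∑ i ∈ Finset.range (n + 1), a i * x ^ i|
      ≤ ((∑ i ∈ Finset.range (n + 1), |a i * x ^ i|)
            / |∑ i ∈ Finset.range (n + 1), a i * x ^ i|)
          * ((1 + u) ^ (2 * n) - 1) := by
  have hstep : ∀ k < n, rhat (2 * (k + 1)) =
      (rhat (2 * k) * x * (1 + δ (2 * k + 1)) + a (n - (k + 1))) * (1 + δ (2 * k + 2)) := by
    intro k hk
    have hodd' := hodd (k + 1) (by omega) hk
    rw [heven (k + 1) (by omega) hk, hodd', show 2 * (k + 1) - 1 = 2 * k + 1 by omega,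
      show 2 * (k + 1) - 2 = 2 * k by omega, show 2 * (k + 1) = 2 * k + 2 by ring]
  have herr := abs_sub_horner_le (r := fun k => rhat (2 * k)) (c := fun j => a (n - j)) hδ
    (by simpa using h0) hstep le_rfl
  have habs : horner (fun j => |a (n - j)|) |x| n = ∑ i ∈ Finset.range (n + 1), |a i * x ^ i| := by
    simp only [horner_rev_eq_sum (fun i => |a i|), abs_mul, abs_pow]
  rw [horner_rev_eq_sum, habs] at herr
  rw [div_mul_eq_mul_div, mul_comm _ ((1 + u) ^ (2 * n) - 1)]
  exact div_le_div_of_nonneg_right herr (abs_nonneg _)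

/-- Deterministic relative forward error bound for Horner's
perturbed recursion, assuming `P(x) ≠ 0`:
`|fl(P(x)) − P(x)|/|P(x)| ≤ cond₁(P,x)·γ_{2n}` where
`cond₁(P,x) = (Σ_{i=0}^n |a_i x^i|)/|P(x)|` and `γ_{2n} = (1+u)^{2n} − 1`. -/
theorem stmt_9 (n : ℕ) (hn : 1 ≤ n) (x : ℝ) (a : ℕ → ℝ) (u : ℝ) (hu : 0 < u)
    (δ : ℕ → ℝ) (hδ : ∀ k, 1 ≤ k → k ≤ 2 * n → |δ k| ≤ u)
    (rhat : ℕ → ℝ) (h0 : rhat 0 = a n)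
    (hodd : ∀ k, 1 ≤ k → k ≤ n →
      rhat (2 * k - 1) = rhat (2 * k - 2) * x * (1 + δ (2 * k - 1)))
    (heven : ∀ k, 1 ≤ k → k ≤ n →
      rhat (2 * k) = (rhat (2 * k - 1) + a (n - k)) * (1 + δ (2 * k)))
    (hP : (∑ i ∈ Finset.range (n + 1), a i * x ^ i) ≠ 0) :
    |rhat (2 * n) - ∑ i ∈ Finset.range (n + 1), a i * x ^ i|
        / |∑ i ∈ Finset.range (n + 1), a i * x ^ i|
      ≤ ((∑ i ∈ Finset.range (n + 1), |a i * x ^ i|)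
            / |∑ i ∈ Finset.range (n + 1), a i * x ^ i|)
          * ((1 + u) ^ (2 * n) - 1) :=
  stmt_9_general n x a u δ hδ rhat h0 hodd heven
end

section
/- Under the stochastic Horner model with x ≠ 0, the sequence Y_1, …, Y_{2n} defined by Y_i = Z_i / x^{⌊(i+1)/2⌋} is a martingale with respect to the filtration F_i = σ(δ_1, …, δ_i): each Y_i is F_i-measurable, integrable, and E[Y_i | F_{i−1}] = Y_{i−1} almost surely for all 1 ≤ i ≤ 2n. -/
/-!
Rounding an affine recursion `s (i+1) = s i * c i + b i` with mean-independent relative errors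
`δ (i+1)` produces, after dividing the error by `p i = c 0 ⋯ c (i-1)`, the increment
`(r̂ i * c i + b i) / p (i+1) * δ (i+1)`, which is a predictable bounded factor times a
conditionally centred variable; so the scaled errors form a martingale. Horner's scheme alternates
the steps `s ↦ s * x` and `s ↦ s + aₖ`, for which `p i = x ^ ⌊(i+1)/2⌋`.
-/

open MeasureTheory ProbabilityTheory
open scoped ENNReal

section

variable {Ω : Type*} {m0 : MeasurableSpace Ω}

noncomputable def roundingFiltration (δ : ℕ → Ω → ℝ) (hδ : ∀ k, Measurable (δ k)) :
    Filtration ℕ m0 where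
  seq i := ⨆ j ∈ Finset.Icc 1 i, MeasurableSpace.comap (δ j) Real.measurableSpace
  mono' _ _ hij := biSup_mono fun _ hj => Finset.Icc_subset_Icc le_rfl hij hj
  le' _ := iSup₂_le fun j _ => (hδ j).comap_le

theorem measurable_roundingFiltration {δ : ℕ → Ω → ℝ} (hδ : ∀ k, Measurable (δ k)) (i : ℕ) :
    Measurable[roundingFiltration δ hδ (i + 1)] (δ (i + 1)) :=
  Measurable.of_comap_le <|
    le_iSup₂ (f := fun j (_ : j ∈ Finset.Icc 1 (i + 1)) =>
      MeasurableSpace.comap (δ j) Real.measurableSpace) (i + 1) (by simp)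

theorem MeasureTheory.MemLp.div_const {𝕜 : Type*} [NormedDivisionRing 𝕜] {μ : Measure Ω}
    {q : ℝ≥0∞} {f : Ω → 𝕜} (hf : MemLp f q μ) (c : 𝕜) : MemLp (fun ω => f ω / c) q μ := by
  simpa only [div_eq_mul_inv] using hf.mul_const c⁻¹

theorem condExp_add_mul_eq_of_condExp_eq_zero {μ : Measure Ω} [IsFiniteMeasure μ]
    {m : MeasurableSpace Ω} (hm : m ≤ m0) {Y W g : Ω → ℝ}
    (hY : StronglyMeasurable[m] Y) (hYi : Integrable Y μ)
    (hW : StronglyMeasurable[m] W) (hWb : MemLp W ∞ μ) (hg : Integrable g μ)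
    (hg0 : μ[g | m] =ᵐ[μ] 0) :
    μ[Y + W * g | m] =ᵐ[μ] Y := by
  have hWg : Integrable (W * g) μ := hg.mul_of_top_right hWb
  filter_upwards [condExp_add hYi hWg m, condExp_mul_of_stronglyMeasurable_left hW hWg hg, hg0]
    with ω hadd hmul hzero
  rw [hadd, Pi.add_apply, condExp_of_stronglyMeasurable hm hY hYi, hmul, Pi.mul_apply, hzero,
    Pi.zero_apply, mul_zero, add_zero]

theorem affine_step_error_div {y r c b p d : ℝ} (hpc : p * c ≠ 0) :
    ((y * c + b) * (1 + d) - (r * c + b)) / (p * c) = (y - r) / p + (y * c + b) / (p * c) * d := by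
  have hp : p ≠ 0 := left_ne_zero_of_mul hpc
  have hc : c ≠ 0 := right_ne_zero_of_mul hpc
  field_simp
  ring

noncomputable def scaledError (rhat : ℕ → Ω → ℝ) (r p : ℕ → ℝ) (i : ℕ) (ω : Ω) : ℝ :=
  (rhat i ω - r i) / p i

section PerturbedAffineRecursion

variable {μ : Measure Ω} {ℱ : Filtration ℕ m0} {δ : ℕ → Ω → ℝ} {N : ℕ}
  {rhat : ℕ → Ω → ℝ} {r c b p : ℕ → ℝ} {y₀ : ℝ}

theorem measurable_memLp_of_perturbed_affine
    (hδ : ∀ i, Measurable[ℱ (i + 1)] (δ (i + 1))) (hδb : ∀ i < N, MemLp (δ (i + 1)) ∞ μ)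
    (h0 : ∀ ω, rhat 0 ω = y₀)
    (hstep : ∀ i < N, ∀ ω, rhat (i + 1) ω = (rhat i ω * c i + b i) * (1 + δ (i + 1) ω)) :
    ∀ i ≤ N, Measurable[ℱ i] (rhat i) ∧ MemLp (rhat i) ∞ μ := by
  intro i hi
  induction i with
  | zero =>
    rw [show rhat 0 = fun _ => y₀ from funext h0]
    exact ⟨measurable_const, memLp_top_const y₀⟩
  | succ i ih =>
    obtain ⟨hm, hL⟩ := ih (by omega)
    rw [show rhat (i + 1) = _ from funext (hstep i hi)]
    have hm' : Measurable[ℱ (i + 1)] (rhat i) := hm.mono (ℱ.mono i.le_succ) le_rfl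
    have hL₁ : MemLp (fun ω => rhat i ω * c i + b i) ∞ μ :=
      (hL.mul_const (c i)).add (memLp_top_const (b i))
    have hL₂ : MemLp (fun ω => 1 + δ (i + 1) ω) ∞ μ := (memLp_top_const (1 : ℝ)).add (hδb i hi)
    exact ⟨((hm'.mul_const (c i)).add_const (b i)).mul ((hδ i).const_add 1), hL₂.mul' hL₁⟩

theorem scaledError_martingale_step [IsFiniteMeasure μ]
    (hδ : ∀ i, Measurable[ℱ (i + 1)] (δ (i + 1))) (hδb : ∀ i < N, MemLp (δ (i + 1)) ∞ μ)
    (hδ0 : ∀ i < N, μ[δ (i + 1) | ℱ i] =ᵐ[μ] 0)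
    (h0 : ∀ ω, rhat 0 ω = y₀)
    (hstep : ∀ i < N, ∀ ω, rhat (i + 1) ω = (rhat i ω * c i + b i) * (1 + δ (i + 1) ω))
    (hr : ∀ i < N, r (i + 1) = r i * c i + b i)
    (hp : ∀ i < N, p (i + 1) = p i * c i) (hp0 : ∀ i, p i ≠ 0) :
    ∀ i < N, Measurable[ℱ (i + 1)] (scaledError rhat r p (i + 1)) ∧
      Integrable (scaledError rhat r p (i + 1)) μ ∧
      μ[scaledError rhat r p (i + 1) | ℱ i] =ᵐ[μ] scaledError rhat r p i := by
  intro i hi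
  have hreg := measurable_memLp_of_perturbed_affine hδ hδb h0 hstep
  have herr : ∀ j ≤ N, Measurable[ℱ j] (scaledError rhat r p j) ∧
      Integrable (scaledError rhat r p j) μ := fun j hj =>
    ⟨((hreg j hj).1.sub_const _).div_const _,
      (((hreg j hj).2.sub (memLp_top_const _)).div_const _).integrable le_top⟩
  obtain ⟨hmi, hLi⟩ := hreg i hi.le
  set W : Ω → ℝ := fun ω => (rhat i ω * c i + b i) / p (i + 1)
  have hdecomp : scaledError rhat r p (i + 1) = scaledError rhat r p i + W * δ (i + 1) := by
    funext ω
    simp only [scaledError, hstep i hi, hr i hi, hp i hi, W, Pi.add_apply, Pi.mul_apply]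
    exact affine_step_error_div (hp i hi ▸ hp0 (i + 1))
  refine ⟨(herr (i + 1) hi).1, (herr (i + 1) hi).2, ?_⟩
  rw [hdecomp]
  have hWm : Measurable[ℱ i] W := ((hmi.mul_const (c i)).add_const (b i)).div_const _
  exact condExp_add_mul_eq_of_condExp_eq_zero (ℱ.le i) (herr i hi.le).1.stronglyMeasurable
    (herr i hi.le).2 hWm.stronglyMeasurable
    (((hLi.mul_const _).add (memLp_top_const _)).div_const _) ((hδb i hi).integrable le_top)
    (hδ0 i hi)

end PerturbedAffineRecursion

end

/-- Step `i ↦ i + 1` of Horner's scheme is `s ↦ s * hornerFactor x i + hornerAddend a n i`. -/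
def hornerFactor (x : ℝ) (i : ℕ) : ℝ := if Even i then x else 1

def hornerAddend (a : ℕ → ℝ) (n i : ℕ) : ℝ := if Even i then 0 else a (n - (i + 1) / 2)

theorem horner_step {x : ℝ} {a : ℕ → ℝ} {n : ℕ} {s d : ℕ → ℝ}
    (hodd : ∀ k, 1 ≤ k → k ≤ n → s (2 * k - 1) = s (2 * k - 2) * x * (1 + d (2 * k - 1)))
    (heven : ∀ k, 1 ≤ k → k ≤ n → s (2 * k) = (s (2 * k - 1) + a (n - k)) * (1 + d (2 * k))) :
    ∀ i < 2 * n, s (i + 1) = (s i * hornerFactor x i + hornerAddend a n i) * (1 + d (i + 1)) := by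
  intro i hi
  rcases Nat.even_or_odd' i with ⟨k, rfl | rfl⟩
  · have h := hodd (k + 1) (by omega) (by omega)
    rw [show 2 * (k + 1) - 1 = 2 * k + 1 by omega, show 2 * (k + 1) - 2 = 2 * k by omega] at h
    simp [hornerFactor, hornerAddend, h]
  · have h := heven (k + 1) (by omega) (by omega)
    rw [show 2 * (k + 1) - 1 = 2 * k + 1 by omega, show 2 * (k + 1) = 2 * k + 1 + 1 by omega] at h
    have hnot_even : ¬Even (2 * k + 1) := Nat.not_even_iff_odd.2 (odd_two_mul_add_one k)
    have hhalf : (2 * k + 1 + 1) / 2 = k + 1 := by omega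
    simp [hornerFactor, hornerAddend, hnot_even, hhalf, h]

theorem pow_half_succ_eq_mul_hornerFactor (x : ℝ) (i : ℕ) :
    x ^ ((i + 1 + 1) / 2) = x ^ ((i + 1) / 2) * hornerFactor x i := by
  rcases Nat.even_or_odd' i with ⟨k, rfl | rfl⟩
  · rw [show (2 * k + 1 + 1) / 2 = k + 1 by omega, show (2 * k + 1) / 2 = k by omega, pow_succ]
    simp [hornerFactor]
  · rw [show (2 * k + 1 + 1 + 1) / 2 = k + 1 by omega, show (2 * k + 1 + 1) / 2 = k + 1 by omega]
    simp [hornerFactor, Nat.not_even_iff_odd.2 (odd_two_mul_add_one k)]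

theorem stmt_10_general {Ω : Type*} [MeasurableSpace Ω] {μ : Measure Ω}
    [IsProbabilityMeasure μ]
    (n : ℕ) (x : ℝ) (hx : x ≠ 0) (a : ℕ → ℝ) (u : ℝ)
    (δ : ℕ → Ω → ℝ) (hδm : ∀ k, Measurable (δ k))
    (hδb : ∀ k, 1 ≤ k → k ≤ 2 * n → ∀ᵐ ω ∂μ, |δ k ω| ≤ u)
    (F : ℕ → MeasurableSpace Ω)
    (hF : ∀ i, F i = ⨆ j ∈ Finset.Icc 1 i,
      MeasurableSpace.comap (δ j) Real.measurableSpace)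
    (hmi : ∀ k, 1 ≤ k → k ≤ 2 * n → μ[δ k | F (k - 1)] =ᵐ[μ] fun _ => 0)
    (rhat : ℕ → Ω → ℝ) (r : ℕ → ℝ)
    (h0 : ∀ ω, rhat 0 ω = a n)
    (hodd : ∀ k, 1 ≤ k → k ≤ n → ∀ ω,
      rhat (2 * k - 1) ω = rhat (2 * k - 2) ω * x * (1 + δ (2 * k - 1) ω))
    (heven : ∀ k, 1 ≤ k → k ≤ n → ∀ ω,
      rhat (2 * k) ω = (rhat (2 * k - 1) ω + a (n - k)) * (1 + δ (2 * k) ω))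
    (hrodd : ∀ k, 1 ≤ k → k ≤ n → r (2 * k - 1) = r (2 * k - 2) * x)
    (hreven : ∀ k, 1 ≤ k → k ≤ n → r (2 * k) = r (2 * k - 1) + a (n - k))
    (Y : ℕ → Ω → ℝ)
    (hY : ∀ i ω, Y i ω = (rhat i ω - r i) / x ^ ((i + 1) / 2)) :
    ∀ i, 1 ≤ i → i ≤ 2 * n →
      Measurable[F i] (Y i) ∧ Integrable (Y i) μ ∧
        μ[Y i | F (i - 1)] =ᵐ[μ] Y (i - 1) := by
  obtain rfl : F = roundingFiltration δ hδm := funext hF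
  obtain rfl : Y = scaledError rhat r fun i => x ^ ((i + 1) / 2) := funext₂ hY
  intro i hi₁ hi₂
  obtain ⟨i, rfl⟩ : ∃ j, i = j + 1 := ⟨i - 1, by omega⟩
  refine scaledError_martingale_step (N := 2 * n) (measurable_roundingFiltration hδm)
    (fun i hi => memLp_top_of_bound (hδm _).aestronglyMeasurable u
      (hδb (i + 1) (by omega) (by omega)))
    (fun i hi => hmi (i + 1) (by omega) (by omega)) h0
    (fun i hi ω => horner_step (s := (rhat · ω)) (d := (δ · ω)) (hodd · · · ω) (heven · · · ω) i hi)
    (fun i hi => by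
      simpa using horner_step (s := r) (d := 0) (by simpa using hrodd) (by simpa using hreven) i hi)
    (fun i _ => pow_half_succ_eq_mul_hornerFactor x i) (fun i => pow_ne_zero _ hx) i (by omega)

/-- Under the stochastic Horner model with `x ≠ 0`, the sequence
`Y_i = Z_i / x^{⌊(i+1)/2⌋}` (with `Z_i = r̂_i − r_i`) is a martingale with
respect to the filtration `F_i = σ(δ_1, …, δ_i)`: each `Y_i` is
`F_i`-measurable, integrable, and `E[Y_i | F_{i−1}] = Y_{i−1}` a.s. -/
theorem stmt_10 {Ω : Type*} [MeasurableSpace Ω] {μ : Measure Ω}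
    [IsProbabilityMeasure μ]
    (n : ℕ) (hn : 1 ≤ n) (x : ℝ) (hx : x ≠ 0) (a : ℕ → ℝ) (u : ℝ) (hu : 0 < u)
    (δ : ℕ → Ω → ℝ) (hδm : ∀ k, Measurable (δ k))
    (hδb : ∀ k, 1 ≤ k → k ≤ 2 * n → ∀ᵐ ω ∂μ, |δ k ω| ≤ u)
    (F : ℕ → MeasurableSpace Ω)
    (hF : ∀ i, F i = ⨆ j ∈ Finset.Icc 1 i,
      MeasurableSpace.comap (δ j) Real.measurableSpace)
    (hmi : ∀ k, 1 ≤ k → k ≤ 2 * n → μ[δ k | F (k - 1)] =ᵐ[μ] fun _ => 0)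
    (rhat : ℕ → Ω → ℝ) (r : ℕ → ℝ)
    (h0 : ∀ ω, rhat 0 ω = a n)
    (hodd : ∀ k, 1 ≤ k → k ≤ n → ∀ ω,
      rhat (2 * k - 1) ω = rhat (2 * k - 2) ω * x * (1 + δ (2 * k - 1) ω))
    (heven : ∀ k, 1 ≤ k → k ≤ n → ∀ ω,
      rhat (2 * k) ω = (rhat (2 * k - 1) ω + a (n - k)) * (1 + δ (2 * k) ω))
    (hr0 : r 0 = a n)
    (hrodd : ∀ k, 1 ≤ k → k ≤ n → r (2 * k - 1) = r (2 * k - 2) * x)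
    (hreven : ∀ k, 1 ≤ k → k ≤ n → r (2 * k) = r (2 * k - 1) + a (n - k))
    (Y : ℕ → Ω → ℝ)
    (hY : ∀ i ω, Y i ω = (rhat i ω - r i) / x ^ ((i + 1) / 2)) :
    ∀ i, 1 ≤ i → i ≤ 2 * n →
      Measurable[F i] (Y i) ∧ Integrable (Y i) μ ∧
        μ[Y i | F (i - 1)] =ᵐ[μ] Y (i - 1) :=
  stmt_10_general n x hx a u δ hδm hδb F hF hmi rhat r h0 hodd heven hrodd hreven Y hY
end

section
/- With Horner's perturbed recursion, for all 1 ≤ k ≤ n the intermediate values satisfy |r̂_{2k−2}| ≤ |a_n|·|x|^{k−1}·(1+u)^{2k−2} + Σ_{j=1}^{k−1} |a_{n−j}|·|x|^{k−1−j}·(1+u)^{2(k−j)−1}. -/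
/-- Bound on the intermediate values of Horner's perturbed
recursion: for `1 ≤ k ≤ n`,
`|r̂_{2k−2}| ≤ |a_n|·|x|^{k−1}·(1+u)^{2k−2}
  + Σ_{j=1}^{k−1} |a_{n−j}|·|x|^{k−1−j}·(1+u)^{2(k−j)−1}`. -/
theorem stmt_11 (n : ℕ) (hn : 1 ≤ n) (x : ℝ) (a : ℕ → ℝ) (u : ℝ) (hu : 0 < u)
    (δ : ℕ → ℝ) (hδ : ∀ k, 1 ≤ k → k ≤ 2 * n → |δ k| ≤ u)
    (rhat : ℕ → ℝ) (h0 : rhat 0 = a n)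
    (hodd : ∀ k, 1 ≤ k → k ≤ n →
      rhat (2 * k - 1) = rhat (2 * k - 2) * x * (1 + δ (2 * k - 1)))
    (heven : ∀ k, 1 ≤ k → k ≤ n →
      rhat (2 * k) = (rhat (2 * k - 1) + a (n - k)) * (1 + δ (2 * k))) :
    ∀ k, 1 ≤ k → k ≤ n →
      |rhat (2 * k - 2)|
        ≤ |a n| * |x| ^ (k - 1) * (1 + u) ^ (2 * k - 2)
          + ∑ j ∈ Finset.Icc 1 (k - 1),
              |a (n - j)| * |x| ^ (k - 1 - j) * (1 + u) ^ (2 * (k - j) - 1) := by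
  have hu1 : (0:ℝ) < 1 + u := by linarith
  intro k hk1
  induction k, hk1 using Nat.le_induction with
  | base => intro _; simp [h0]
  | succ k hk ih =>
    intro hkn
    obtain ⟨m, rfl⟩ : ∃ m, k = m + 1 := ⟨k - 1, by omega⟩
    have hkn' : m + 1 ≤ n := by omega
    have IH := ih hkn'
    -- bounds on the deltas
    have hδo : |1 + δ (2 * (m + 1) - 1)| ≤ 1 + u := by
      have := hδ (2 * (m + 1) - 1) (by omega) (by omega)
      calc |1 + δ (2 * (m + 1) - 1)| ≤ 1 + |δ (2 * (m + 1) - 1)| := by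
            simpa using abs_add_le 1 (δ (2 * (m + 1) - 1))
        _ ≤ 1 + u := by linarith
    have hδe : |1 + δ (2 * (m + 1))| ≤ 1 + u := by
      have := hδ (2 * (m + 1)) (by omega) (by omega)
      calc |1 + δ (2 * (m + 1))| ≤ 1 + |δ (2 * (m + 1))| := by
            simpa using abs_add_le 1 (δ (2 * (m + 1)))
        _ ≤ 1 + u := by linarith
    have e2 : 2 * (m + 1 + 1) - 2 = 2 * (m + 1) := by omega
    have e3 : 2 * (m + 1) - 2 = 2 * m := by omega
    rw [e2, heven (m + 1) (by omega) hkn', hodd (m + 1) (by omega) hkn', e3]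
    have step1 : |(rhat (2 * m) * x * (1 + δ (2 * (m + 1) - 1)) + a (n - (m + 1))) *
          (1 + δ (2 * (m + 1)))|
        ≤ (|rhat (2 * m)| * |x| * (1 + u) + |a (n - (m + 1))|) * (1 + u) := by
      rw [abs_mul]
      have h1 : |rhat (2 * m) * x * (1 + δ (2 * (m + 1) - 1)) + a (n - (m + 1))|
          ≤ |rhat (2 * m)| * |x| * (1 + u) + |a (n - (m + 1))| := by
        calc |rhat (2 * m) * x * (1 + δ (2 * (m + 1) - 1)) + a (n - (m + 1))|
            ≤ |rhat (2 * m) * x * (1 + δ (2 * (m + 1) - 1))| + |a (n - (m + 1))| :=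
              abs_add_le _ _
          _ ≤ |rhat (2 * m)| * |x| * (1 + u) + |a (n - (m + 1))| := by
              rw [abs_mul, abs_mul]
              gcongr
      have h2 : (0:ℝ) ≤ |rhat (2 * m) * x * (1 + δ (2 * (m + 1) - 1)) + a (n - (m + 1))| :=
        abs_nonneg _
      nlinarith [abs_nonneg (1 + δ (2 * (m + 1)))]
    refine le_trans step1 ?_
    have step2 : (|rhat (2 * m)| * |x| * (1 + u) + |a (n - (m + 1))|) * (1 + u)
        ≤ ((|a n| * |x| ^ (m + 1 - 1) * (1 + u) ^ (2 * (m + 1) - 2)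
            + ∑ j ∈ Finset.Icc 1 (m + 1 - 1),
                |a (n - j)| * |x| ^ (m + 1 - 1 - j) * (1 + u) ^ (2 * (m + 1 - j) - 1))
              * |x| * (1 + u) + |a (n - (m + 1))|) * (1 + u) := by
      gcongr
      rw [show 2 * m = 2 * (m + 1) - 2 by omega]
      exact ih hkn'
    refine le_trans step2 (le_of_eq ?_)
    -- now a pure algebraic identity
    simp only [Nat.add_sub_cancel]
    have esum : (∑ j ∈ Finset.Icc 1 m,
          |a (n - j)| * |x| ^ (m - j) * (1 + u) ^ (2 * (m + 1 - j) - 1)) * (|x| * (1 + u) ^ 2)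
        = ∑ j ∈ Finset.Icc 1 m,
            |a (n - j)| * |x| ^ (m + 1 - j) * (1 + u) ^ (2 * (m + 1 + 1 - j) - 1) := by
      rw [Finset.sum_mul]
      refine Finset.sum_congr rfl fun j hj => ?_
      obtain ⟨hj1, hjm⟩ := Finset.mem_Icc.mp hj
      have hx : |x| ^ (m + 1 - j) = |x| ^ (m - j) * |x| := by
        rw [← pow_succ]; congr 1; omega
      have hup : (1 + u) ^ (2 * (m + 1 + 1 - j) - 1)
          = (1 + u) ^ (2 * (m + 1 - j) - 1) * (1 + u) ^ 2 := by
        rw [← pow_add]; congr 1; omega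
      rw [hx, hup]; ring
    rw [Finset.sum_Icc_succ_top (by omega : 1 ≤ m + 1), ← esum]
    have ea : 2 * (m + 1 + 1) - 2 = 2 * m + 2 := by omega
    have eb : 2 * (m + 1) - 2 = 2 * m := by omega
    have ec : m + 1 - (m + 1) = 0 := by omega
    have ed : 2 * (m + 1 + 1 - (m + 1)) - 1 = 1 := by omega
    rw [eb, ec, ed]
    ring
end

section
/- Under the stochastic Horner model with x ≠ 0, the martingale increments satisfy, almost surely, |Y_i − Y_{i−1}| ≤ C_i·u for all 1 ≤ i ≤ 2n (with Y_0 = 0), where C_{2k−1} = |a_n|·(1+u)^{2k−2} + Σ_{j=1}^{k−1} |a_{n−j}|·|x|^{−j}·(1+u)^{2(k−j)−1} and C_{2k} = |a_n|·(1+u)^{2k−1} + Σ_{j=1}^{k} |a_{n−j}|·|x|^{−j}·(1+u)^{2(k−j)} for 1 ≤ k ≤ n. -/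
open MeasureTheory ProbabilityTheory

noncomputable def stmt12D (a : ℕ → ℝ) (n : ℕ) (x u : ℝ) : ℕ → ℝ := fun m =>
  |a n| * (1 + u) ^ (2 * m)
    + ∑ j ∈ Finset.Icc 1 m, |a (n - j)| * |x| ^ (-(j : ℤ)) * (1 + u) ^ (2 * (m - j) + 1)

lemma stmt12D_zero (a : ℕ → ℝ) (n : ℕ) (x u : ℝ) : stmt12D a n x u 0 = |a n| := by
  simp [stmt12D]

lemma stmt12D_nonneg (a : ℕ → ℝ) (n : ℕ) (x u : ℝ) (hu : 0 ≤ u) (m : ℕ) :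
    0 ≤ stmt12D a n x u m := by
  unfold stmt12D
  have h1 : (0:ℝ) ≤ 1 + u := by linarith
  positivity

lemma stmt12D_succ (a : ℕ → ℝ) (n : ℕ) (x u : ℝ) (m : ℕ) :
    stmt12D a n x u (m + 1)
      = stmt12D a n x u m * (1 + u) ^ 2
        + |a (n - (m + 1))| * |x| ^ (-((m + 1 : ℕ) : ℤ)) * (1 + u) := by
  unfold stmt12D
  rw [Finset.sum_Icc_succ_top (by omega : 1 ≤ m + 1)]
  have h1 : ∑ j ∈ Finset.Icc 1 m,
      |a (n - j)| * |x| ^ (-(j : ℤ)) * (1 + u) ^ (2 * (m + 1 - j) + 1)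
      = (∑ j ∈ Finset.Icc 1 m,
          |a (n - j)| * |x| ^ (-(j : ℤ)) * (1 + u) ^ (2 * (m - j) + 1)) * (1 + u) ^ 2 := by
    rw [Finset.sum_mul]
    refine Finset.sum_congr rfl fun j hj => ?_
    have hjm : j ≤ m := (Finset.mem_Icc.1 hj).2
    have he : 2 * (m + 1 - j) + 1 = (2 * (m - j) + 1) + 2 := by omega
    rw [he, pow_add]
    ring
  rw [h1]
  have he2 : 2 * (m + 1) = 2 * m + 2 := by omega
  rw [he2, pow_add]
  have he3 : 2 * (m + 1 - (m + 1)) + 1 = 1 := by omega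
  rw [he3]
  ring

/-- Under the stochastic Horner model with `x ≠ 0`, the
martingale increments satisfy almost surely `|Y_i − Y_{i−1}| ≤ C_i·u`
for `1 ≤ i ≤ 2n` (with `Y_0 = 0`), where
`C_{2k−1} = |a_n|(1+u)^{2k−2} + Σ_{j=1}^{k−1} |a_{n−j}|·|x|^{−j}·(1+u)^{2(k−j)−1}`
and `C_{2k} = |a_n|(1+u)^{2k−1} + Σ_{j=1}^{k} |a_{n−j}|·|x|^{−j}·(1+u)^{2(k−j)}`. -/
theorem stmt_12 {Ω : Type*} [MeasurableSpace Ω] {μ : Measure Ω}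
    [IsProbabilityMeasure μ]
    (n : ℕ) (hn : 1 ≤ n) (x : ℝ) (hx : x ≠ 0) (a : ℕ → ℝ) (u : ℝ) (hu : 0 < u)
    (δ : ℕ → Ω → ℝ) (hδm : ∀ k, Measurable (δ k))
    (hδb : ∀ k, 1 ≤ k → k ≤ 2 * n → ∀ᵐ ω ∂μ, |δ k ω| ≤ u)
    (F : ℕ → MeasurableSpace Ω)
    (hF : ∀ i, F i = ⨆ j ∈ Finset.Icc 1 i,
      MeasurableSpace.comap (δ j) Real.measurableSpace)
    (hmi : ∀ k, 1 ≤ k → k ≤ 2 * n → μ[δ k | F (k - 1)] =ᵐ[μ] fun _ => 0)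
    (rhat : ℕ → Ω → ℝ) (r : ℕ → ℝ)
    (h0 : ∀ ω, rhat 0 ω = a n)
    (hodd : ∀ k, 1 ≤ k → k ≤ n → ∀ ω,
      rhat (2 * k - 1) ω = rhat (2 * k - 2) ω * x * (1 + δ (2 * k - 1) ω))
    (heven : ∀ k, 1 ≤ k → k ≤ n → ∀ ω,
      rhat (2 * k) ω = (rhat (2 * k - 1) ω + a (n - k)) * (1 + δ (2 * k) ω))
    (hr0 : r 0 = a n)
    (hrodd : ∀ k, 1 ≤ k → k ≤ n → r (2 * k - 1) = r (2 * k - 2) * x)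
    (hreven : ∀ k, 1 ≤ k → k ≤ n → r (2 * k) = r (2 * k - 1) + a (n - k))
    (Y : ℕ → Ω → ℝ)
    (hY : ∀ i ω, Y i ω = (rhat i ω - r i) / x ^ ((i + 1) / 2))
    (C : ℕ → ℝ)
    (hCodd : ∀ k, 1 ≤ k → k ≤ n →
      C (2 * k - 1) = |a n| * (1 + u) ^ (2 * k - 2)
        + ∑ j ∈ Finset.Icc 1 (k - 1),
            |a (n - j)| * |x| ^ (-(j : ℤ)) * (1 + u) ^ (2 * (k - j) - 1))
    (hCeven : ∀ k, 1 ≤ k → k ≤ n →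
      C (2 * k) = |a n| * (1 + u) ^ (2 * k - 1)
        + ∑ j ∈ Finset.Icc 1 k,
            |a (n - j)| * |x| ^ (-(j : ℤ)) * (1 + u) ^ (2 * (k - j))) :
    ∀ i, 1 ≤ i → i ≤ 2 * n →
      ∀ᵐ ω ∂μ, |Y i ω - Y (i - 1) ω| ≤ C i * u := by
  have hb : ∀ᵐ ω ∂μ, ∀ k, 1 ≤ k → k ≤ 2 * n → |δ k ω| ≤ u := by
    rw [ae_all_iff]
    intro k
    by_cases h : 1 ≤ k ∧ k ≤ 2 * n
    · filter_upwards [hδb k h.1 h.2] with ω hω _ _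
      exact hω
    · filter_upwards with ω h1 h2
      exact absurd ⟨h1, h2⟩ h
  intro i hi1 hi2
  filter_upwards [hb] with ω hω
  set D := stmt12D a n x u with hDdef
  have hxpos : (0:ℝ) < |x| := abs_pos.2 hx
  have hu1 : (0:ℝ) ≤ 1 + u := by linarith
  have hone : ∀ j, 1 ≤ j → j ≤ 2 * n → |1 + δ j ω| ≤ 1 + u := by
    intro j h1 h2
    calc |1 + δ j ω| ≤ |(1:ℝ)| + |δ j ω| := abs_add_le _ _
      _ ≤ 1 + u := by rw [abs_one]; linarith [hω j h1 h2]
  have hzpow : ∀ j : ℕ, |x| ^ (-(j : ℤ)) = (|x| ^ j)⁻¹ := by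
    intro j; rw [zpow_neg, zpow_natCast]
  -- key bound on |rhat (2m)|
  have hrb : ∀ m, m ≤ n → |rhat (2 * m) ω| ≤ |x| ^ m * D m := by
    intro m
    induction m with
    | zero =>
      intro _
      simp [h0, hDdef, stmt12D_zero]
    | succ m ih =>
      intro hm
      have hm' : m ≤ n := by omega
      have ihm := ih hm'
      have e1 := heven (m + 1) (by omega) hm ω
      have e2 := hodd (m + 1) (by omega) hm ω
      have e3 : 2 * (m + 1) - 2 = 2 * m := by omega
      rw [e3] at e2
      have hδ1 := hone (2 * (m + 1) - 1) (by omega) (by omega)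
      have hδ2 := hone (2 * (m + 1)) (by omega) (by omega)
      have hA : (0:ℝ) ≤ |a (n - (m + 1))| := abs_nonneg _
      have hDm := stmt12D_nonneg a n x u hu.le m
      calc |rhat (2 * (m + 1)) ω|
          = |rhat (2 * m) ω * x * (1 + δ (2 * (m + 1) - 1) ω) + a (n - (m + 1))|
              * |1 + δ (2 * (m + 1)) ω| := by rw [e1, e2, abs_mul]
        _ ≤ (|rhat (2 * m) ω| * |x| * (1 + u) + |a (n - (m + 1))|) * (1 + u) := by
            have t1 : |rhat (2 * m) ω * x * (1 + δ (2 * (m + 1) - 1) ω)|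
                ≤ |rhat (2 * m) ω| * |x| * (1 + u) := by
              rw [abs_mul, abs_mul]
              exact mul_le_mul_of_nonneg_left hδ1 (by positivity)
            have t2 : |rhat (2 * m) ω * x * (1 + δ (2 * (m + 1) - 1) ω) + a (n - (m + 1))|
                ≤ |rhat (2 * m) ω| * |x| * (1 + u) + |a (n - (m + 1))| :=
              (abs_add_le _ _).trans (by linarith)
            exact mul_le_mul t2 hδ2 (abs_nonneg _) (by positivity)
        _ ≤ (|x| ^ m * D m * |x| * (1 + u) + |a (n - (m + 1))|) * (1 + u) := by
            have : |rhat (2 * m) ω| * |x| * (1 + u) ≤ |x| ^ m * D m * |x| * (1 + u) := by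
              have := mul_le_mul_of_nonneg_right ihm hxpos.le
              exact mul_le_mul_of_nonneg_right this hu1
            nlinarith
        _ = |x| ^ (m + 1) * D (m + 1) := by
            rw [hDdef, stmt12D_succ, hzpow]
            have hne : (|x| : ℝ) ^ (m + 1) ≠ 0 := by positivity
            field_simp
            ring
      -- done
  have hu0 : (0:ℝ) ≤ u := hu.le
  rcases Nat.even_or_odd i with he | ho
  · -- even case : i = 2 * (d+1)
    obtain ⟨c, hc⟩ := he
    have hc1 : 1 ≤ c := by omega
    obtain ⟨d, rfl⟩ : ∃ d, c = d + 1 := ⟨c - 1, by omega⟩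
    have hie : i = 2 * (d + 1) := by omega
    have hdn : d + 1 ≤ n := by omega
    have e1 := heven (d + 1) (by omega) hdn ω
    have e2 := hodd (d + 1) (by omega) hdn ω
    have er := hreven (d + 1) (by omega) hdn
    have e3 : 2 * (d + 1) - 2 = 2 * d := by omega
    rw [e3] at e2
    have him1 : i - 1 = 2 * (d + 1) - 1 := by omega
    have hexp1 : (i + 1) / 2 = d + 1 := by omega
    have hexp2 : ((i - 1) + 1) / 2 = d + 1 := by omega
    have hxc : x ^ (d + 1) ≠ 0 := pow_ne_zero _ hx
    have hdiff : Y i ω - Y (i - 1) ω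
        = (rhat (2 * (d + 1) - 1) ω + a (n - (d + 1))) * δ i ω / x ^ (d + 1) := by
      rw [hY, hY, hexp1, hexp2, him1, ← him1]
      rw [him1, hie] at *
      rw [e1, er]
      field_simp
      ring
    have hbnd : |rhat (2 * (d + 1) - 1) ω + a (n - (d + 1))|
        ≤ |x| ^ (d + 1) * (D d * (1 + u) + |a (n - (d + 1))| * (|x| ^ (d + 1))⁻¹) := by
      have hδ1 := hone (2 * (d + 1) - 1) (by omega) (by omega)
      have hrd := hrb d (by omega)
      have hDd := stmt12D_nonneg a n x u hu.le d
      calc |rhat (2 * (d + 1) - 1) ω + a (n - (d + 1))|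
          ≤ |rhat (2 * (d + 1) - 1) ω| + |a (n - (d + 1))| := abs_add_le _ _
        _ ≤ |rhat (2 * d) ω| * |x| * (1 + u) + |a (n - (d + 1))| := by
            rw [e2, abs_mul, abs_mul]
            have := mul_le_mul_of_nonneg_left hδ1
              (by positivity : (0:ℝ) ≤ |rhat (2 * d) ω| * |x|)
            linarith
        _ ≤ |x| ^ d * D d * |x| * (1 + u) + |a (n - (d + 1))| := by
            have h := mul_le_mul_of_nonneg_right
              (mul_le_mul_of_nonneg_right hrd hxpos.le) hu1
            linarith
        _ = |x| ^ (d + 1) * (D d * (1 + u) + |a (n - (d + 1))| * (|x| ^ (d + 1))⁻¹) := by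
            have hne : (|x| : ℝ) ^ (d + 1) ≠ 0 := by positivity
            field_simp
            ring
    have hCeq : C i = D d * (1 + u) + |a (n - (d + 1))| * (|x| ^ (d + 1))⁻¹ := by
      rw [hie, hCeven (d + 1) (by omega) hdn]
      rw [Finset.sum_Icc_succ_top (by omega : 1 ≤ d + 1)]
      have hs : ∑ j ∈ Finset.Icc 1 d,
          |a (n - j)| * |x| ^ (-(j : ℤ)) * (1 + u) ^ (2 * ((d + 1) - j))
          = (∑ j ∈ Finset.Icc 1 d,
              |a (n - j)| * |x| ^ (-(j : ℤ)) * (1 + u) ^ (2 * (d - j) + 1)) * (1 + u) := by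
        rw [Finset.sum_mul]
        refine Finset.sum_congr rfl fun j hj => ?_
        have hjm : j ≤ d := (Finset.mem_Icc.1 hj).2
        have he : 2 * ((d + 1) - j) = (2 * (d - j) + 1) + 1 := by omega
        rw [he, pow_succ]
        ring
      rw [hs]
      have he4 : 2 * (d + 1) - 1 = 2 * d + 1 := by omega
      have he5 : 2 * ((d + 1) - (d + 1)) = 0 := by omega
      rw [he4, he5, pow_succ, pow_zero, hzpow (d + 1)]
      rw [hDdef]
      unfold stmt12D
      push_cast
      ring
    rw [hdiff, hCeq]
    have hδi := hω i (by omega) (by omega)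
    have hnum : |(rhat (2 * (d + 1) - 1) ω + a (n - (d + 1))) * δ i ω|
        ≤ |x| ^ (d + 1) * (D d * (1 + u) + |a (n - (d + 1))| * (|x| ^ (d + 1))⁻¹) * u := by
      rw [abs_mul]
      have hDd := stmt12D_nonneg a n x u hu.le d
      refine mul_le_mul hbnd hδi (abs_nonneg _) ?_
      have h1 : (0:ℝ) ≤ |a (n - (d + 1))| * (|x| ^ (d + 1))⁻¹ := by positivity
      have h2 : (0:ℝ) ≤ D d * (1 + u) := mul_nonneg hDd hu1
      have h3 : (0:ℝ) ≤ |x| ^ (d + 1) := by positivity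
      nlinarith
    calc |(rhat (2 * (d + 1) - 1) ω + a (n - (d + 1))) * δ i ω / x ^ (d + 1)|
        = |(rhat (2 * (d + 1) - 1) ω + a (n - (d + 1))) * δ i ω| / |x| ^ (d + 1) := by
          rw [abs_div, abs_pow]
      _ ≤ |x| ^ (d + 1) * (D d * (1 + u) + |a (n - (d + 1))| * (|x| ^ (d + 1))⁻¹) * u
            / |x| ^ (d + 1) := by
          apply div_le_div_of_nonneg_right hnum (by positivity)
      _ = (D d * (1 + u) + |a (n - (d + 1))| * (|x| ^ (d + 1))⁻¹) * u := by
          have hne : (|x| : ℝ) ^ (d + 1) ≠ 0 := by positivity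
          field_simp
  · -- odd case : i = 2 * c + 1 = 2 * (c+1) - 1
    obtain ⟨c, hc⟩ := ho
    have hcn : c + 1 ≤ n := by omega
    have e2 := hodd (c + 1) (by omega) hcn ω
    have er := hrodd (c + 1) (by omega) hcn
    have e3 : 2 * (c + 1) - 2 = 2 * c := by omega
    have e4 : 2 * (c + 1) - 1 = i := by omega
    rw [e3, e4] at e2
    rw [e3, e4] at er
    have him1 : i - 1 = 2 * c := by omega
    have hexp1 : (i + 1) / 2 = c + 1 := by omega
    have hexp2 : ((i - 1) + 1) / 2 = c := by omega
    have hxc : x ^ c ≠ 0 := pow_ne_zero _ hx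
    have hxc1 : x ^ (c + 1) ≠ 0 := pow_ne_zero _ hx
    have hdiff : Y i ω - Y (i - 1) ω = rhat (2 * c) ω * δ i ω / x ^ c := by
      rw [hY, hY, hexp1, hexp2, him1, e2, er]
      field_simp
      ring
    have hCeq : C i = D c := by
      rw [← e4, hCodd (c + 1) (by omega) hcn]
      have he4 : 2 * (c + 1) - 2 = 2 * c := by omega
      have he5 : (c + 1) - 1 = c := by omega
      rw [he4, he5, hDdef]
      unfold stmt12D
      congr 1
      refine Finset.sum_congr rfl fun j hj => ?_
      have hjm : j ≤ c := (Finset.mem_Icc.1 hj).2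
      have he : 2 * ((c + 1) - j) - 1 = 2 * (c - j) + 1 := by omega
      rw [he]
    rw [hdiff, hCeq]
    have hδi := hω i (by omega) (by omega)
    have hrd := hrb c (by omega)
    have hDd := stmt12D_nonneg a n x u hu.le c
    have hnum : |rhat (2 * c) ω * δ i ω| ≤ |x| ^ c * D c * u := by
      rw [abs_mul]
      exact mul_le_mul hrd hδi (abs_nonneg _) (by positivity)
    calc |rhat (2 * c) ω * δ i ω / x ^ c|
        = |rhat (2 * c) ω * δ i ω| / |x| ^ c := by rw [abs_div, abs_pow]
      _ ≤ |x| ^ c * D c * u / |x| ^ c :=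
          div_le_div_of_nonneg_right hnum (by positivity)
      _ = D c * u := by
          have hne : (|x| : ℝ) ^ c ≠ 0 := by positivity
          field_simp
end

section
/- For x ≠ 0, u > 0 and 1 ≤ k ≤ n, the weighted increment constants satisfy |x|^n·C_{2k} ≤ (1+u)^{2k−1}·Σ_{j=0}^{n} |a_j x^j| and |x|^n·C_{2k−1} ≤ (1+u)^{2k−2}·Σ_{j=0}^{n} |a_j x^j|. -/
/-- For `x ≠ 0`, `u > 0` and `1 ≤ k ≤ n`, the weighted increment
constants satisfy `|x|^n·C_{2k} ≤ (1+u)^{2k−1}·Σ_{j=0}^n |a_j x^j|` and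
`|x|^n·C_{2k−1} ≤ (1+u)^{2k−2}·Σ_{j=0}^n |a_j x^j|`. -/
theorem stmt_13 (n : ℕ) (hn : 1 ≤ n) (x : ℝ) (hx : x ≠ 0) (a : ℕ → ℝ)
    (u : ℝ) (hu : 0 < u)
    (C : ℕ → ℝ)
    (hCodd : ∀ k, 1 ≤ k → k ≤ n →
      C (2 * k - 1) = |a n| * (1 + u) ^ (2 * k - 2)
        + ∑ j ∈ Finset.Icc 1 (k - 1),
            |a (n - j)| * |x| ^ (-(j : ℤ)) * (1 + u) ^ (2 * (k - j) - 1))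
    (hCeven : ∀ k, 1 ≤ k → k ≤ n →
      C (2 * k) = |a n| * (1 + u) ^ (2 * k - 1)
        + ∑ j ∈ Finset.Icc 1 k,
            |a (n - j)| * |x| ^ (-(j : ℤ)) * (1 + u) ^ (2 * (k - j))) :
    ∀ k, 1 ≤ k → k ≤ n →
      |x| ^ n * C (2 * k)
          ≤ (1 + u) ^ (2 * k - 1) * ∑ j ∈ Finset.range (n + 1), |a j * x ^ j| ∧
      |x| ^ n * C (2 * k - 1)
          ≤ (1 + u) ^ (2 * k - 2) * ∑ j ∈ Finset.range (n + 1), |a j * x ^ j| := by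
  intro k hk1 hkn
  set S := ∑ j ∈ Finset.range (n + 1), |a j * x ^ j| with hS
  have hxpos : 0 < |x| := abs_pos.mpr hx
  have hu1 : 1 ≤ 1 + u := by linarith
  have hu0 : (0:ℝ) < 1 + u := by linarith
  -- general helper
  have gen : ∀ (m : Finset ℕ) (e : ℕ → ℕ) (E : ℕ), m ⊆ Finset.Icc 1 k →
      (∀ j ∈ m, e j ≤ E) →
      |x| ^ n * (|a n| * (1 + u) ^ E
        + ∑ j ∈ m, |a (n - j)| * |x| ^ (-(j : ℤ)) * (1 + u) ^ (e j))
        ≤ (1 + u) ^ E * S := by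
    intro m e E hm he
    have key : |a n * x ^ n| + ∑ j ∈ m, |a (n - j) * x ^ (n - j)| ≤ S := by
      have hinj : ∀ p ∈ m, ∀ q ∈ m, n - p = n - q → p = q := by
        intro p hp q hq hpq
        have hp' := Finset.mem_Icc.mp (hm hp)
        have hq' := Finset.mem_Icc.mp (hm hq)
        omega
      have him : ∑ i ∈ m.image (fun j => n - j), |a i * x ^ i|
          = ∑ j ∈ m, |a (n - j) * x ^ (n - j)| := Finset.sum_image hinj
      rw [← him]
      have hnmem : n ∉ m.image (fun j => n - j) := by
        simp only [Finset.mem_image]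
        rintro ⟨j, hj, hjn⟩
        have := Finset.mem_Icc.mp (hm hj)
        omega
      rw [← Finset.sum_insert (f := fun i => |a i * x ^ i|) hnmem]
      apply Finset.sum_le_sum_of_subset_of_nonneg
      · intro i hi
        simp only [Finset.mem_insert, Finset.mem_image] at hi
        simp only [Finset.mem_range]
        rcases hi with h | ⟨j, hj, hj'⟩
        · omega
        · have := Finset.mem_Icc.mp (hm hj)
          omega
      · intro j _ _; exact abs_nonneg _
    rw [mul_add, Finset.mul_sum]
    have step : ∀ j ∈ m, |x| ^ n * (|a (n - j)| * |x| ^ (-(j : ℤ)) * (1 + u) ^ (e j))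
        ≤ (1 + u) ^ E * |a (n - j) * x ^ (n - j)| := by
      intro j hj
      have hj' := Finset.mem_Icc.mp (hm hj)
      have hxn : |x| ^ n * |x| ^ (-(j : ℤ)) = |x| ^ (n - j) := by
        rw [zpow_neg, zpow_natCast]
        rw [mul_inv_eq_iff_eq_mul₀ (by positivity), ← pow_add]
        congr 1
        omega
      have habs : |a (n - j) * x ^ (n - j)| = |a (n - j)| * |x| ^ (n - j) := by
        rw [abs_mul, abs_pow]
      have hpow : (1 + u) ^ (e j) ≤ (1 + u) ^ E :=
        pow_le_pow_right₀ hu1 (he j hj)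
      calc |x| ^ n * (|a (n - j)| * |x| ^ (-(j : ℤ)) * (1 + u) ^ (e j))
          = (|a (n - j)| * |x| ^ (n - j)) * (1 + u) ^ (e j) := by
            rw [← hxn]; ring
        _ ≤ (|a (n - j)| * |x| ^ (n - j)) * (1 + u) ^ E := by
            apply mul_le_mul_of_nonneg_left hpow; positivity
        _ = (1 + u) ^ E * |a (n - j) * x ^ (n - j)| := by rw [habs]; ring
    calc |x| ^ n * (|a n| * (1 + u) ^ E)
          + ∑ j ∈ m, |x| ^ n * (|a (n - j)| * |x| ^ (-(j : ℤ)) * (1 + u) ^ (e j))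
        ≤ (1 + u) ^ E * |a n * x ^ n|
          + ∑ j ∈ m, (1 + u) ^ E * |a (n - j) * x ^ (n - j)| := by
          apply add_le_add
          · rw [abs_mul, abs_pow]; ring_nf; exact le_of_eq (by ring)
          · exact Finset.sum_le_sum step
      _ = (1 + u) ^ E * (|a n * x ^ n| + ∑ j ∈ m, |a (n - j) * x ^ (n - j)|) := by
          rw [← Finset.mul_sum]; ring
      _ ≤ (1 + u) ^ E * S := by
          apply mul_le_mul_of_nonneg_left key; positivity
  constructor
  · rw [hCeven k hk1 hkn]
    apply gen (Finset.Icc 1 k) (fun j => 2 * (k - j)) (2 * k - 1)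
      (Finset.Subset.refl _)
    intro j hj
    have := Finset.mem_Icc.mp hj
    omega
  · rw [hCodd k hk1 hkn]
    apply gen (Finset.Icc 1 (k - 1)) (fun j => 2 * (k - j) - 1) (2 * k - 2)
      (Finset.Icc_subset_Icc_right (by omega))
    intro j hj
    have := Finset.mem_Icc.mp hj
    omega
end

section
/- For x ≠ 0, u > 0 and n ≥ 1, the weighted increment constants satisfy Σ_{i=1}^{2n} (|x|^n·C_i)^2 ≤ (Σ_{j=0}^{n} |a_j x^j|)^2 · γ_{4n} / (u^2 + 2u), where γ_{4n} = (1+u)^{4n} − 1. -/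
/-!
Since `|x|^n · |x|^(-j) = |x|^(n-j)`, the constant `|x|^n · C_i` is a partial sum of the reflected
terms `|a_{n-j}| |x|^(n-j)` of `S = Σ_j |a_j x^j|`, each weighted by a power of `1 + u` of exponent
at most `i - 1`; hence `|x|^n · C_i ≤ S (1+u)^(i-1)`. Squaring and summing over `i ≤ 2n` gives a
geometric series of ratio `(1+u)^2`, and `(1+u)^2 - 1 = u^2 + 2u`.
-/

open Finset

lemma abs_add_sum_Icc_le_sum_range (a : ℕ → ℝ) (x : ℝ) {m n : ℕ} (hm : m ≤ n) :
    |a n| * |x| ^ n + ∑ j ∈ Icc 1 m, |a (n - j)| * |x| ^ (n - j)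
      ≤ ∑ j ∈ range (n + 1), |a j * x ^ j| := by
  have head_add_sum : |a n| * |x| ^ n + ∑ j ∈ Icc 1 m, |a (n - j)| * |x| ^ (n - j)
      = ∑ j ∈ range (m + 1), |a (n - j)| * |x| ^ (n - j) := by
    rw [range_eq_Ico, sum_eq_sum_Ico_succ_bot (by omega : 0 < m + 1), zero_add,
      Ico_add_one_right_eq_Icc, Nat.sub_zero]
  rw [head_add_sum, ← sum_range_reflect (fun j => |a j * x ^ j|) (n + 1)]
  simp only [add_tsub_cancel_right, abs_mul, abs_pow]
  exact sum_le_sum_of_subset_of_nonneg (range_subset_range.2 (by omega))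
    fun _ _ _ => by positivity

lemma abs_pow_mul_abs_zpow_neg {x : ℝ} (hx : x ≠ 0) {j n : ℕ} (hj : j ≤ n) :
    |x| ^ n * |x| ^ (-(j : ℤ)) = |x| ^ (n - j) := by
  rw [zpow_neg, zpow_natCast, pow_sub₀ _ (abs_ne_zero.2 hx) hj]

lemma abs_pow_mul_add_sum_le {a : ℕ → ℝ} {x c : ℝ} (hx : x ≠ 0) (hc : 1 ≤ c)
    {n m L E : ℕ} {e : ℕ → ℕ} (hm : m ≤ n) (hL : L ≤ E) (he : ∀ j ∈ Icc 1 m, e j ≤ E) :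
    |x| ^ n * (|a n| * c ^ L + ∑ j ∈ Icc 1 m, |a (n - j)| * |x| ^ (-(j : ℤ)) * c ^ e j)
      ≤ (∑ j ∈ range (n + 1), |a j * x ^ j|) * c ^ E := by
  calc _ = |a n| * |x| ^ n * c ^ L + ∑ j ∈ Icc 1 m, |a (n - j)| * |x| ^ (n - j) * c ^ e j := by
        rw [mul_add, mul_sum]
        congr 1
        · ring
        · refine sum_congr rfl fun j hj => ?_
          rw [← abs_pow_mul_abs_zpow_neg hx ((mem_Icc.1 hj).2.trans hm)]
          ring
    _ ≤ |a n| * |x| ^ n * c ^ E + ∑ j ∈ Icc 1 m, |a (n - j)| * |x| ^ (n - j) * c ^ E := by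
        gcongr with j hj
        exact he j hj
    _ ≤ (∑ j ∈ range (n + 1), |a j * x ^ j|) * c ^ E := by
        rw [← sum_mul, ← add_mul]
        gcongr
        exact abs_add_sum_Icc_le_sum_range a x hm

lemma sum_Icc_sq_mul_pow_pred (S : ℝ) {c : ℝ} (hc : c ^ 2 ≠ 1) (N : ℕ) :
    ∑ i ∈ Icc 1 N, (S * c ^ (i - 1)) ^ 2 = S ^ 2 * (c ^ (2 * N) - 1) / (c ^ 2 - 1) := by
  rw [← Ico_add_one_right_eq_Icc, sum_Ico_eq_sum_range, add_tsub_cancel_right, pow_mul,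
    mul_div_assoc, ← geom_sum_eq hc, mul_sum]
  refine sum_congr rfl fun i _ => ?_
  rw [add_tsub_cancel_left, mul_pow, ← pow_mul, ← pow_mul, mul_comm i]

theorem stmt_14_general (n : ℕ) (x : ℝ) (hx : x ≠ 0) (a : ℕ → ℝ)
    (u : ℝ) (hu : 0 < u)
    (C : ℕ → ℝ)
    (hCodd : ∀ k, 1 ≤ k → k ≤ n →
      C (2 * k - 1) = |a n| * (1 + u) ^ (2 * k - 2)
        + ∑ j ∈ Finset.Icc 1 (k - 1),
            |a (n - j)| * |x| ^ (-(j : ℤ)) * (1 + u) ^ (2 * (k - j) - 1))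
    (hCeven : ∀ k, 1 ≤ k → k ≤ n →
      C (2 * k) = |a n| * (1 + u) ^ (2 * k - 1)
        + ∑ j ∈ Finset.Icc 1 k,
            |a (n - j)| * |x| ^ (-(j : ℤ)) * (1 + u) ^ (2 * (k - j))) :
    ∑ i ∈ Finset.Icc 1 (2 * n), (|x| ^ n * C i) ^ 2
      ≤ (∑ j ∈ Finset.range (n + 1), |a j * x ^ j|) ^ 2
          * ((1 + u) ^ (4 * n) - 1) / (u ^ 2 + 2 * u) := by
  set S := ∑ j ∈ range (n + 1), |a j * x ^ j|
  have hu1 : 1 ≤ 1 + u := by linarith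
  have bound : ∀ i ∈ Icc 1 (2 * n),
      0 ≤ |x| ^ n * C i ∧ |x| ^ n * C i ≤ S * (1 + u) ^ (i - 1) := by
    intro i hi
    obtain ⟨k, hk1, hkn, rfl | rfl⟩ : ∃ k, 1 ≤ k ∧ k ≤ n ∧ (i = 2 * k ∨ i = 2 * k - 1) :=
      ⟨(i + 1) / 2, by grind⟩
    · rw [hCeven k hk1 hkn]
      exact ⟨by positivity, abs_pow_mul_add_sum_le hx hu1 hkn le_rfl
        fun j hj => by grind⟩
    · rw [hCodd k hk1 hkn]
      exact ⟨by positivity, abs_pow_mul_add_sum_le hx hu1 (by omega) (by omega)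
        fun j hj => by grind⟩
  calc ∑ i ∈ Icc 1 (2 * n), (|x| ^ n * C i) ^ 2
      ≤ ∑ i ∈ Icc 1 (2 * n), (S * (1 + u) ^ (i - 1)) ^ 2 :=
        sum_le_sum fun i hi => pow_le_pow_left₀ (bound i hi).1 (bound i hi).2 2
    _ = S ^ 2 * ((1 + u) ^ (4 * n) - 1) / (u ^ 2 + 2 * u) := by
        rw [sum_Icc_sq_mul_pow_pred S (by nlinarith) (2 * n), ← mul_assoc]
        ring_nf

/-- For `x ≠ 0`, `u > 0` and `n ≥ 1`, the weighted increment
constants satisfy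
`Σ_{i=1}^{2n} (|x|^n·C_i)² ≤ (Σ_{j=0}^n |a_j x^j|)²·γ_{4n}/(u² + 2u)`,
where `γ_{4n} = (1+u)^{4n} − 1`. -/
theorem stmt_14 (n : ℕ) (hn : 1 ≤ n) (x : ℝ) (hx : x ≠ 0) (a : ℕ → ℝ)
    (u : ℝ) (hu : 0 < u)
    (C : ℕ → ℝ)
    (hCodd : ∀ k, 1 ≤ k → k ≤ n →
      C (2 * k - 1) = |a n| * (1 + u) ^ (2 * k - 2)
        + ∑ j ∈ Finset.Icc 1 (k - 1),
            |a (n - j)| * |x| ^ (-(j : ℤ)) * (1 + u) ^ (2 * (k - j) - 1))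
    (hCeven : ∀ k, 1 ≤ k → k ≤ n →
      C (2 * k) = |a n| * (1 + u) ^ (2 * k - 1)
        + ∑ j ∈ Finset.Icc 1 k,
            |a (n - j)| * |x| ^ (-(j : ℤ)) * (1 + u) ^ (2 * (k - j))) :
    ∑ i ∈ Finset.Icc 1 (2 * n), (|x| ^ n * C i) ^ 2
      ≤ (∑ j ∈ Finset.range (n + 1), |a j * x ^ j|) ^ 2
          * ((1 + u) ^ (4 * n) - 1) / (u ^ 2 + 2 * u) :=
  stmt_14_general n x hx a u hu C hCodd hCeven
end

section
/- Under the stochastic Horner model with x ≠ 0, for every 0 < λ < 1, with probability at least 1 − λ the absolute forward error satisfies |r̂_{2n} − P(x)| ≤ (Σ_{j=0}^{n} |a_j x^j|) · √(u·γ_{4n}/(2+u)) · √(2·ln(2/λ)), where γ_{4n} = (1+u)^{4n} − 1. -/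
open MeasureTheory ProbabilityTheory


lemma sr15_exp_le (s y c : ℝ) (hc : 0 < c) (hy : |y| ≤ c) :
    Real.exp (s * y) ≤ Real.cosh (s * c) + (y / c) * Real.sinh (s * c) := by
  obtain ⟨hy1, hy2⟩ := abs_le.mp hy
  have hc' : (2 : ℝ) * c ≠ 0 := by positivity
  have hθ0 : 0 ≤ (c + y) / (2 * c) := div_nonneg (by linarith) (by linarith)
  have hθ0' : 0 ≤ (c - y) / (2 * c) := div_nonneg (by linarith) (by linarith)
  have hsum : (c + y) / (2 * c) + (c - y) / (2 * c) = 1 := by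
    rw [← add_div, div_eq_one_iff_eq hc']; ring
  have hcx := convexOn_exp.2 (Set.mem_univ (s * c)) (Set.mem_univ (-(s * c))) hθ0 hθ0' hsum
  simp only [smul_eq_mul] at hcx
  have hcomb : (c + y) / (2 * c) * (s * c) + (c - y) / (2 * c) * (-(s * c)) = s * y := by
    field_simp; ring
  rw [hcomb] at hcx
  refine hcx.trans_eq ?_
  rw [Real.cosh_eq, Real.sinh_eq]
  field_simp
  ring

lemma sr15_step {Ω : Type*} [m0 : MeasurableSpace Ω] {μ : Measure Ω} [IsProbabilityMeasure μ]
    {m : MeasurableSpace Ω} (hm : m ≤ m0)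
    {f ψ X : Ω → ℝ} (hf : StronglyMeasurable[m] f) (hfnn : ∀ ω, 0 ≤ f ω)
    {C : ℝ} (hfb : ∀ᵐ ω ∂μ, f ω ≤ C)
    (hψ : StronglyMeasurable[m] ψ) {b : ℝ} (hb : 0 ≤ b) (hψb : ∀ᵐ ω ∂μ, |ψ ω| ≤ b)
    (hX : Measurable[m0] X) {c : ℝ} (hc : 0 < c) (hXb : ∀ᵐ ω ∂μ, |X ω| ≤ c)
    (hcond : μ[X|m] =ᵐ[μ] fun _ => 0) (t : ℝ) :
    ∫ ω, f ω * Real.exp (t * (ψ ω * X ω)) ∂μ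
      ≤ Real.exp ((t * b * c) ^ 2 / 2) * ∫ ω, f ω ∂μ := by
  haveI : SigmaFinite (μ.trim hm) := inferInstance
  set g : Ω → ℝ := fun ω => Real.exp (t * (ψ ω * X ω)) with hg_def
  set h1 : Ω → ℝ := fun ω => Real.cosh (t * ψ ω * c) with hh1_def
  set h2 : Ω → ℝ := fun ω => Real.sinh (t * ψ ω * c) / c with hh2_def
  have hψm0 : Measurable[m0] ψ := (hψ.mono hm).measurable
  have hfm0 : AEStronglyMeasurable[m0] f μ := (hf.mono hm).aestronglyMeasurable
  have hgm : Measurable[m0] g := (measurable_const.mul (hψm0.mul hX)).exp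
  have hh1m : StronglyMeasurable[m] h1 :=
    Real.continuous_cosh.comp_stronglyMeasurable ((hψ.const_mul t).mul_const c)
  have hh2m : StronglyMeasurable[m] h2 := by
    have := (Real.continuous_sinh.comp_stronglyMeasurable
      ((hψ.const_mul t).mul_const c)).mul_const c⁻¹
    simpa [div_eq_mul_inv, hh2_def] using this
  -- a.e. bounds
  have hCf : ∀ᵐ ω ∂μ, ‖f ω‖ ≤ max C 0 := by
    filter_upwards [hfb] with ω hω
    rw [Real.norm_eq_abs, abs_of_nonneg (hfnn ω)]
    exact le_max_of_le_left hω
  have hKg : ∀ᵐ ω ∂μ, ‖g ω‖ ≤ Real.exp (|t| * (b * c)) := by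
    filter_upwards [hψb, hXb] with ω h1' h2'
    rw [Real.norm_eq_abs, abs_of_pos (Real.exp_pos _), Real.exp_le_exp]
    calc t * (ψ ω * X ω) ≤ |t * (ψ ω * X ω)| := le_abs_self _
      _ = |t| * (|ψ ω| * |X ω|) := by rw [abs_mul, abs_mul]
      _ ≤ |t| * (b * c) := by
          apply mul_le_mul_of_nonneg_left _ (abs_nonneg t)
          exact mul_le_mul h1' h2' (abs_nonneg _) hb
  have habs : ∀ᵐ ω ∂μ, |t * ψ ω * c| ≤ |t| * b * c := by
    filter_upwards [hψb] with ω hω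
    rw [abs_mul, abs_mul, abs_of_pos hc]
    exact mul_le_mul_of_nonneg_right (mul_le_mul_of_nonneg_left hω (abs_nonneg t)) hc.le
  have hK1 : ∀ᵐ ω ∂μ, ‖h1 ω‖ ≤ Real.cosh (|t| * b * c) := by
    filter_upwards [habs] with ω hω
    rw [Real.norm_eq_abs, abs_of_pos (Real.cosh_pos _)]
    apply Real.cosh_le_cosh.mpr
    rwa [abs_of_nonneg (by positivity : (0:ℝ) ≤ |t| * b * c)]
  have hK2 : ∀ᵐ ω ∂μ, ‖h2 ω‖ ≤ Real.sinh (|t| * b * c) / c := by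
    filter_upwards [habs] with ω hω
    rw [Real.norm_eq_abs, abs_div, abs_of_pos hc, Real.abs_sinh]
    exact (div_le_div_iff_of_pos_right hc).mpr (Real.sinh_le_sinh.mpr hω)
  -- integrabilities
  have hfi : Integrable f μ := (integrable_const (max C 0)).mono' hfm0 hCf
  have hXi : Integrable X μ := (integrable_const c).mono' hX.aestronglyMeasurable
    (by filter_upwards [hXb] with ω h using by rwa [Real.norm_eq_abs])
  have hgi : Integrable g μ := (integrable_const _).mono' hgm.aestronglyMeasurable hKg
  have hmul_int : ∀ {p q : Ω → ℝ} (Kp Kq : ℝ), AEStronglyMeasurable[m0] p μ →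
      AEStronglyMeasurable[m0] q μ → (∀ᵐ ω ∂μ, ‖p ω‖ ≤ Kp) → (∀ᵐ ω ∂μ, ‖q ω‖ ≤ Kq) →
      Integrable (fun ω => p ω * q ω) μ := by
    intro p q Kp Kq hp hq hpb hqb
    refine (integrable_const (Kp * Kq)).mono' (hp.mul hq) ?_
    filter_upwards [hpb, hqb] with ω h1' h2'
    rw [norm_mul]
    have h0 : (0:ℝ) ≤ ‖q ω‖ := norm_nonneg _
    exact mul_le_mul h1' h2' h0 ((norm_nonneg (p ω)).trans h1')
  have hfgi : Integrable (fun ω => f ω * g ω) μ :=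
    hmul_int _ _ hfm0 hgm.aestronglyMeasurable hCf hKg
  have hfh1i : Integrable (fun ω => f ω * h1 ω) μ :=
    hmul_int _ _ hfm0 (hh1m.mono hm).aestronglyMeasurable hCf hK1
  have hfh2m : AEStronglyMeasurable[m0] (fun ω => f ω * h2 ω) μ :=
    hfm0.mul (hh2m.mono hm).aestronglyMeasurable
  have hfh2b : ∀ᵐ ω ∂μ, ‖f ω * h2 ω‖ ≤ max C 0 * (Real.sinh (|t| * b * c) / c) := by
    filter_upwards [hCf, hK2] with ω h1' h2'
    rw [norm_mul]
    exact mul_le_mul h1' h2' (norm_nonneg _) ((norm_nonneg _).trans h1')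
  have hfh2Xi : Integrable (fun ω => f ω * h2 ω * X ω) μ :=
    hmul_int _ _ hfh2m hX.aestronglyMeasurable hfh2b
      (by filter_upwards [hXb] with ω h using by rwa [Real.norm_eq_abs])
  have hfhi : Integrable (fun ω => f ω * (h1 ω + h2 ω * X ω)) μ := by
    have : (fun ω => f ω * (h1 ω + h2 ω * X ω))
        = fun ω => f ω * h1 ω + f ω * h2 ω * X ω := by funext ω; ring
    rw [this]
    exact hfh1i.add hfh2Xi
  -- pointwise a.e. inequality
  have hgh : ∀ᵐ ω ∂μ, f ω * g ω ≤ f ω * (h1 ω + h2 ω * X ω) := by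
    filter_upwards [hXb] with ω hXω
    apply mul_le_mul_of_nonneg_left _ (hfnn ω)
    have h := sr15_exp_le (t * ψ ω) (X ω) c hc hXω
    calc g ω = Real.exp (t * ψ ω * X ω) := by rw [hg_def]; simp [mul_assoc]
      _ ≤ Real.cosh (t * ψ ω * c) + X ω / c * Real.sinh (t * ψ ω * c) := h
      _ = h1 ω + h2 ω * X ω := by rw [hh1_def, hh2_def]; ring
  -- conditional expectation computation
  have hA : μ[fun ω => f ω * g ω|m] ≤ᵐ[μ] μ[fun ω => f ω * (h1 ω + h2 ω * X ω)|m] :=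
    condExp_mono hfgi hfhi hgh
  have hB : μ[fun ω => f ω * (h1 ω + h2 ω * X ω)|m]
      =ᵐ[μ] fun ω => f ω * h1 ω := by
    have hsplit : (fun ω => f ω * (h1 ω + h2 ω * X ω))
        = (fun ω => f ω * h1 ω) + fun ω => (f ω * h2 ω) * X ω := by funext ω; simp; ring
    rw [hsplit]
    refine (condExp_add hfh1i hfh2Xi m).trans ?_
    have e1 : μ[fun ω => f ω * h1 ω|m] = fun ω => f ω * h1 ω :=
      condExp_of_stronglyMeasurable hm (hf.mul hh1m) hfh1i
    have e2 : μ[fun ω => (f ω * h2 ω) * X ω|m] =ᵐ[μ] fun _ => 0 := by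
      have := condExp_mul_of_stronglyMeasurable_left (μ := μ) (hf.mul hh2m) hfh2Xi hXi
      refine this.trans ?_
      filter_upwards [hcond] with ω hω
      simp only [Pi.mul_apply, hω, mul_zero]
    filter_upwards [e2] with ω hω
    simp only [Pi.add_apply, e1, hω, add_zero]
  have hfh1le : (fun ω => f ω * h1 ω) ≤ᵐ[μ] fun ω => Real.exp ((t * b * c) ^ 2 / 2) * f ω := by
    filter_upwards [habs] with ω hω
    have h1le : h1 ω ≤ Real.exp ((t * b * c) ^ 2 / 2) := by
      refine (Real.cosh_le_exp_half_sq _).trans ?_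
      rw [Real.exp_le_exp]
      have habs2 : |t * b * c| = |t| * b * c := by
        rw [abs_mul, abs_mul, abs_of_nonneg hb, abs_of_pos hc]
      have : (t * ψ ω * c) ^ 2 ≤ (t * b * c) ^ 2 := by
        rw [← sq_abs (t * ψ ω * c), ← sq_abs (t * b * c), habs2]
        exact pow_le_pow_left₀ (abs_nonneg _) hω 2
      linarith
    calc f ω * h1 ω ≤ f ω * Real.exp ((t * b * c) ^ 2 / 2) :=
          mul_le_mul_of_nonneg_left h1le (hfnn ω)
      _ = Real.exp ((t * b * c) ^ 2 / 2) * f ω := mul_comm _ _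
  -- conclude
  calc ∫ ω, f ω * g ω ∂μ = ∫ ω, (μ[fun ω => f ω * g ω|m]) ω ∂μ :=
        (integral_condExp hm).symm
    _ ≤ ∫ ω, Real.exp ((t * b * c) ^ 2 / 2) * f ω ∂μ := by
        refine integral_mono_ae integrable_condExp (hfi.const_mul _) ?_
        exact hA.trans (hB.le.trans hfh1le)
    _ = Real.exp ((t * b * c) ^ 2 / 2) * ∫ ω, f ω ∂μ := integral_const_mul _ _


lemma sr15_pair_sum (r : ℝ) (j : ℕ) :
    ∑ k ∈ Finset.range j, (r ^ (2*k) + r ^ (2*k+1)) = ∑ m ∈ Finset.range (2*j), r ^ m := by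
  induction j with
  | zero => simp
  | succ j ih =>
    rw [Finset.sum_range_succ, ih]
    have h2 : 2 * (j+1) = (2*j+1)+1 := by ring
    rw [h2, Finset.sum_range_succ, Finset.sum_range_succ]
    ring

/-- Probabilistic absolute forward error bound for Horner's rule
under SR-nearness: for every `0 < λ < 1`, with probability at least `1 − λ`,
`|r̂_{2n} − P(x)| ≤ (Σ_{j=0}^n |a_j x^j|)·√(u·γ_{4n}/(2+u))·√(2·ln(2/λ))`,
where `γ_{4n} = (1+u)^{4n} − 1`. -/
theorem stmt_15 {Ω : Type*} [MeasurableSpace Ω] {μ : Measure Ω}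
    [IsProbabilityMeasure μ]
    (n : ℕ) (hn : 1 ≤ n) (x : ℝ) (hx : x ≠ 0) (a : ℕ → ℝ) (u : ℝ) (hu : 0 < u)
    (δ : ℕ → Ω → ℝ) (hδm : ∀ k, Measurable (δ k))
    (hδb : ∀ k, 1 ≤ k → k ≤ 2 * n → ∀ᵐ ω ∂μ, |δ k ω| ≤ u)
    (F : ℕ → MeasurableSpace Ω)
    (hF : ∀ i, F i = ⨆ j ∈ Finset.Icc 1 i,
      MeasurableSpace.comap (δ j) Real.measurableSpace)
    (hmi : ∀ k, 1 ≤ k → k ≤ 2 * n → μ[δ k | F (k - 1)] =ᵐ[μ] fun _ => 0)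
    (rhat : ℕ → Ω → ℝ)
    (h0 : ∀ ω, rhat 0 ω = a n)
    (hodd : ∀ k, 1 ≤ k → k ≤ n → ∀ ω,
      rhat (2 * k - 1) ω = rhat (2 * k - 2) ω * x * (1 + δ (2 * k - 1) ω))
    (heven : ∀ k, 1 ≤ k → k ≤ n → ∀ ω,
      rhat (2 * k) ω = (rhat (2 * k - 1) ω + a (n - k)) * (1 + δ (2 * k) ω))
    (lam : ℝ) (hlam0 : 0 < lam) (hlam1 : lam < 1) :
    ENNReal.ofReal (1 - lam) ≤
      μ {ω | |rhat (2 * n) ω - ∑ i ∈ Finset.range (n + 1), a i * x ^ i|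
        ≤ (∑ j ∈ Finset.range (n + 1), |a j * x ^ j|)
            * Real.sqrt (u * ((1 + u) ^ (4 * n) - 1) / (2 + u))
            * Real.sqrt (2 * Real.log (2 / lam))} := by
  -- plus-form recursions
  have hodd' : ∀ j, j < n → ∀ ω,
      rhat (2*j+1) ω = rhat (2*j) ω * x * (1 + δ (2*j+1) ω) := by
    intro j hj ω
    have h := hodd (j+1) (by omega) (by omega) ω
    have e1 : 2*(j+1)-1 = 2*j+1 := by omega
    have e2 : 2*(j+1)-2 = 2*j := by omega
    rw [e1, e2] at h; exact h
  have heven' : ∀ j, j < n → ∀ ω,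
      rhat (2*j+2) ω = (rhat (2*j+1) ω + a (n-(j+1))) * (1 + δ (2*j+2) ω) := by
    intro j hj ω
    have h := heven (j+1) (by omega) (by omega) ω
    have e2 : 2*(j+1)-1 = 2*j+1 := by omega
    have e1 : 2*(j+1) = 2*j+2 := by omega
    rw [e2, e1] at h; exact h
  set P : ℝ := ∑ i ∈ Finset.range (n + 1), a i * x ^ i with hP
  set S : ℝ := ∑ j ∈ Finset.range (n + 1), |a j * x ^ j| with hSdef
  set T : ℕ → ℝ := fun j => ∑ l ∈ Finset.range (j+1), |a (n - l) * x ^ (n - l)| with hTdef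
  have hTn : T n = S := by
    rw [hTdef, hSdef]
    exact Finset.sum_range_reflect (fun i => |a i * x ^ i|) (n+1)
  have hTmono : ∀ j, j ≤ n → T j ≤ S := by
    intro j hj
    rw [← hTn]
    apply Finset.sum_le_sum_of_subset_of_nonneg
    · exact Finset.range_subset_range.mpr (by omega)
    · intro i _ _; positivity
  have hT0 : ∀ j, 0 ≤ T j := by
    intro j; apply Finset.sum_nonneg; intro i _; positivity
  have hS0 : 0 ≤ S := by rw [← hTn]; exact hT0 n
  -- filtration facts
  have hFle : ∀ i, F i ≤ ‹MeasurableSpace Ω› := by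
    intro i; rw [hF]
    apply iSup₂_le
    intro j _
    exact measurable_iff_comap_le.mp (hδm j)
  have hFmono : Monotone F := by
    intro i i' h
    rw [hF, hF]
    apply biSup_mono
    intro j hj
    simp only [Finset.mem_Icc] at *
    omega
  have hδFm : ∀ j i, 1 ≤ j → j ≤ i → Measurable[F i] (δ j) := by
    intro j i h1 h2
    have hle : MeasurableSpace.comap (δ j) Real.measurableSpace ≤ F i := by
      rw [hF]
      exact le_iSup₂ (f := fun (j : ℕ) (_ : j ∈ Finset.Icc 1 i) =>
        MeasurableSpace.comap (δ j) Real.measurableSpace) j (Finset.mem_Icc.mpr ⟨h1, h2⟩)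
    exact (measurable_iff_comap_le.mpr le_rfl).mono hle le_rfl
  -- measurability of rhat
  have hrm : ∀ j, j ≤ n → Measurable[F (2*j)] (rhat (2*j)) ∧
      (j < n → Measurable[F (2*j+1)] (rhat (2*j+1))) := by
    intro j
    induction j with
    | zero =>
      intro _
      have hc : Measurable[F 0] (rhat 0) := by
        have : rhat 0 = fun _ => a n := funext h0
        rw [this]; exact measurable_const
      refine ⟨by simpa using hc, ?_⟩
      intro h0n
      have : rhat (2*0+1) = fun ω => rhat (2*0) ω * x * (1 + δ (2*0+1) ω) :=
        funext (hodd' 0 h0n)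
      rw [this]
      exact (((by simpa using hc : Measurable[F (2*0)] (rhat (2*0))).mono
        (hFmono (by omega)) le_rfl).mul_const x).mul
        (measurable_const.add (hδFm (2*0+1) (2*0+1) (by omega) le_rfl))
    | succ j ih =>
      intro hj
      obtain ⟨hE, hO⟩ := ih (by omega)
      have hOm : Measurable[F (2*j+1)] (rhat (2*j+1)) := hO (by omega)
      have hEm1 : Measurable[F (2*j+2)] (rhat (2*j+2)) := by
        have : rhat (2*j+2) = fun ω => (rhat (2*j+1) ω + a (n-(j+1))) * (1 + δ (2*j+2) ω) :=
          funext (heven' j (by omega))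
        rw [this]
        exact ((hOm.mono (hFmono (by omega)) le_rfl).add measurable_const).mul
          (measurable_const.add (hδFm (2*j+2) (2*j+2) (by omega) le_rfl))
      have e : 2*(j+1) = 2*j+2 := by omega
      rw [e]
      refine ⟨hEm1, ?_⟩
      intro hj1
      have hj1' : j+1 < n := by omega
      have : rhat (2*j+2+1) = fun ω => rhat (2*(j+1)) ω * x * (1 + δ (2*(j+1)+1) ω) := by
        funext ω
        have h := hodd' (j+1) hj1' ω
        rw [e] at h
        exact h
      rw [this, e]
      exact (((hEm1.mono (hFmono (by omega)) le_rfl).mul_const x).mul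
        (measurable_const.add (hδFm (2*j+2+1) (2*j+2+1) (by omega) le_rfl)))
  -- increments
  set psiO : ℕ → Ω → ℝ := fun j ω => x ^ (n-j) * rhat (2*j) ω with hpsiO
  set psiE : ℕ → Ω → ℝ := fun j ω => x ^ (n-j-1) * (rhat (2*j+1) ω + a (n-j-1)) with hpsiE
  set D : ℕ → Ω → ℝ := fun j ω => psiO j ω * δ (2*j+1) ω + psiE j ω * δ (2*j+2) ω with hD
  set M : ℕ → Ω → ℝ := fun j ω => ∑ k ∈ Finset.range j, D k ω with hM
  -- error identity
  have hid : ∀ ω, ∀ j, j ≤ n → x ^ (n-j) * rhat (2*j) ω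
      = (∑ l ∈ Finset.range (j+1), a (n-l) * x ^ (n-l)) + M j ω := by
    intro ω j
    induction j with
    | zero =>
      intro _
      simp only [hM, hD, Finset.range_zero, Finset.sum_empty, Finset.range_one,
        Finset.sum_range_succ, Nat.mul_zero, Nat.sub_zero, h0 ω]
      simp [h0 ω]
      ring
    | succ j ih =>
      intro hj1
      have hjlt : j < n := by omega
      have ihx := ih (by omega)
      have e2 : 2*(j+1) = 2*j+2 := by omega
      have esub : n - (j+1) = n - j - 1 := by omega
      have epow : x ^ (n-j) = x ^ (n-j-1) * x := by
        rw [← pow_succ]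
        congr 1
        omega
      rw [epow] at ihx
      rw [e2, esub, heven' j hjlt ω, hodd' j hjlt ω]
      have hMsucc : M (j+1) ω = M j ω + D j ω := by
        simp only [hM, Finset.sum_range_succ]
      have hsum : (∑ l ∈ Finset.range (j+1+1), a (n-l) * x ^ (n-l))
          = (∑ l ∈ Finset.range (j+1), a (n-l) * x ^ (n-l))
            + a (n-(j+1)) * x ^ (n-(j+1)) := Finset.sum_range_succ _ _
      rw [hMsucc, hsum, esub]
      simp only [hD, hpsiO, hpsiE, hodd' j hjlt ω, epow]
      linear_combination ihx
  have herr : ∀ ω, rhat (2*n) ω - P = M n ω := by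
    intro ω
    have h := hid ω n le_rfl
    have e0 : n - n = 0 := by omega
    rw [e0, pow_zero, one_mul] at h
    have hrefl : (∑ l ∈ Finset.range (n+1), a (n-l) * x ^ (n-l)) = P := by
      rw [hP]
      exact Finset.sum_range_reflect (fun i => a i * x ^ i) (n+1)
    rw [h, hrefl]
    ring
  -- pointwise deterministic bounds
  have hone_le : ∀ m : ℕ, (1:ℝ) ≤ (1+u)^m := fun m => one_le_pow₀ (by linarith)
  have hpt : ∀ ω, (∀ k ∈ Finset.Icc 1 (2*n), |δ k ω| ≤ u) → ∀ j, j ≤ n →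
      (|x| ^ (n-j) * |rhat (2*j) ω| ≤ (1+u)^(2*j) * T j ∧
       (j < n → |x| ^ (n-j-1) * |rhat (2*j+1) ω| ≤ (1+u)^(2*j+1) * T j)) := by
    intro ω hω
    have hδle : ∀ k, 1 ≤ k → k ≤ 2*n → |1 + δ k ω| ≤ 1 + u := by
      intro k h1 h2
      calc |1 + δ k ω| ≤ |(1:ℝ)| + |δ k ω| := abs_add_le _ _
        _ ≤ 1 + u := by
            rw [abs_one]
            have := hω k (Finset.mem_Icc.mpr ⟨h1, h2⟩)
            linarith
    have hOstep : ∀ j, j < n →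
        |x| ^ (n-j) * |rhat (2*j) ω| ≤ (1+u)^(2*j) * T j →
        |x| ^ (n-j-1) * |rhat (2*j+1) ω| ≤ (1+u)^(2*j+1) * T j := by
      intro j hjlt hEj
      have epow : |x| ^ (n-j) = |x| ^ (n-j-1) * |x| := by
        rw [← pow_succ]; congr 1; omega
      rw [hodd' j hjlt ω]
      calc |x| ^ (n-j-1) * |rhat (2*j) ω * x * (1 + δ (2*j+1) ω)|
          = (|x| ^ (n-j-1) * |x| * |rhat (2*j) ω|) * |1 + δ (2*j+1) ω| := by
            rw [abs_mul, abs_mul]; ring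
        _ ≤ (|x| ^ (n-j) * |rhat (2*j) ω|) * (1+u) := by
            rw [epow]
            apply mul_le_mul_of_nonneg_left (hδle (2*j+1) (by omega) (by omega))
            positivity
        _ ≤ ((1+u)^(2*j) * T j) * (1+u) := by
            apply mul_le_mul_of_nonneg_right hEj (by linarith)
        _ = (1+u)^(2*j+1) * T j := by rw [pow_succ]; ring
    intro j
    induction j with
    | zero =>
      intro _
      have hbase : |x| ^ (n-0) * |rhat (2*0) ω| ≤ (1+u)^(2*0) * T 0 := by
        have e : T 0 = |a n * x ^ n| := by simp [hTdef]
        rw [Nat.mul_zero, Nat.sub_zero, e, pow_zero, one_mul]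
        apply le_of_eq
        rw [h0 ω, abs_mul, abs_pow]
        ring
      exact ⟨hbase, fun h0n => hOstep 0 h0n hbase⟩
    | succ j ih =>
      intro hj1
      have hjlt : j < n := by omega
      obtain ⟨hEj, hOj⟩ := ih (by omega)
      have hOj' := hOj hjlt
      have hEj1 : |x| ^ (n-(j+1)) * |rhat (2*(j+1)) ω| ≤ (1+u)^(2*(j+1)) * T (j+1) := by
        have e2 : 2*(j+1) = 2*j+2 := by omega
        have esub : n - (j+1) = n - j - 1 := by omega
        rw [e2, esub, heven' j hjlt ω]
        have hTsucc : T (j+1) = T j + |a (n-(j+1)) * x ^ (n-(j+1))| :=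
          Finset.sum_range_succ _ _
        calc |x| ^ (n-j-1) * |(rhat (2*j+1) ω + a (n-(j+1))) * (1 + δ (2*j+2) ω)|
            = (|x| ^ (n-j-1) * |rhat (2*j+1) ω + a (n-(j+1))|) * |1 + δ (2*j+2) ω| := by
              rw [abs_mul]; ring
          _ ≤ (|x| ^ (n-j-1) * (|rhat (2*j+1) ω| + |a (n-(j+1))|)) * (1+u) := by
              apply mul_le_mul (mul_le_mul_of_nonneg_left (abs_add_le _ _) (by positivity))
                (hδle (2*j+2) (by omega) (by omega)) (abs_nonneg _) (by positivity)
          _ = (|x| ^ (n-j-1) * |rhat (2*j+1) ω| + |x| ^ (n-j-1) * |a (n-(j+1))|) * (1+u) := by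
              ring
          _ ≤ ((1+u)^(2*j+1) * T j + (1+u)^(2*j+1) * |a (n-(j+1)) * x ^ (n-(j+1))|) * (1+u) := by
              apply mul_le_mul_of_nonneg_right _ (by linarith)
              apply add_le_add hOj'
              have : |x| ^ (n-j-1) * |a (n-(j+1))| = |a (n-(j+1)) * x ^ (n-(j+1))| := by
                rw [abs_mul, abs_pow]
                have : n - (j+1) = n - j - 1 := by omega
                rw [this]; ring
              rw [this]
              exact le_mul_of_one_le_left (abs_nonneg _) (hone_le _)
          _ = (1+u)^(2*j+2) * T (j+1) := by
              rw [hTsucc]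
              have : (1+u)^(2*j+2) = (1+u)^(2*j+1) * (1+u) := by rw [pow_succ]
              rw [this]; ring
      exact ⟨hEj1, fun hj1n => hOstep (j+1) hj1n hEj1⟩
  have hball : ∀ᵐ ω ∂μ, ∀ k ∈ Finset.Icc 1 (2*n), |δ k ω| ≤ u := by
    rw [Finset.eventually_all]
    intro k hk
    rw [Finset.mem_Icc] at hk
    exact hδb k hk.1 hk.2
  -- strong measurability of psi
  have hpsiOm : ∀ j, j < n → StronglyMeasurable[F (2*j)] (psiO j) := by
    intro j hj
    exact (((hrm j hj.le).1).const_mul (x ^ (n-j))).stronglyMeasurable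
  have hpsiEm : ∀ j, j < n → StronglyMeasurable[F (2*j+1)] (psiE j) := by
    intro j hj
    exact ((((hrm j hj.le).2 hj).add measurable_const).const_mul (x ^ (n-j-1))).stronglyMeasurable
  -- pointwise bounds on psi, D, M
  have hpOpt : ∀ ω, (∀ k ∈ Finset.Icc 1 (2*n), |δ k ω| ≤ u) → ∀ j, j < n →
      |psiO j ω| ≤ S * (1+u)^(2*j) := by
    intro ω hω j hj
    have h := (hpt ω hω j hj.le).1
    have he : |psiO j ω| = |x| ^ (n-j) * |rhat (2*j) ω| := by
      rw [hpsiO]; rw [abs_mul, abs_pow]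
    rw [he]
    refine h.trans ?_
    rw [mul_comm S _]
    exact mul_le_mul_of_nonneg_left (hTmono j hj.le) (by positivity)
  have hpEpt : ∀ ω, (∀ k ∈ Finset.Icc 1 (2*n), |δ k ω| ≤ u) → ∀ j, j < n →
      |psiE j ω| ≤ S * (1+u)^(2*j+1) := by
    intro ω hω j hj
    have hO := (hpt ω hω j hj.le).2 hj
    have hTsucc : T (j+1) = T j + |a (n-(j+1)) * x ^ (n-(j+1))| := Finset.sum_range_succ _ _
    have esub : n - (j+1) = n - j - 1 := by omega
    calc |psiE j ω| = |x| ^ (n-j-1) * |rhat (2*j+1) ω + a (n-j-1)| := by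
          rw [hpsiE]; rw [abs_mul, abs_pow]
      _ ≤ |x| ^ (n-j-1) * (|rhat (2*j+1) ω| + |a (n-j-1)|) :=
          mul_le_mul_of_nonneg_left (abs_add_le _ _) (by positivity)
      _ = |x| ^ (n-j-1) * |rhat (2*j+1) ω| + |x| ^ (n-j-1) * |a (n-j-1)| := by ring
      _ ≤ (1+u)^(2*j+1) * T j + (1+u)^(2*j+1) * |a (n-(j+1)) * x ^ (n-(j+1))| := by
          apply add_le_add hO
          have he : |x| ^ (n-j-1) * |a (n-j-1)| = |a (n-(j+1)) * x ^ (n-(j+1))| := by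
            rw [abs_mul, abs_pow, esub]; ring
          rw [he]
          exact le_mul_of_one_le_left (abs_nonneg _) (hone_le _)
      _ = (1+u)^(2*j+1) * T (j+1) := by rw [hTsucc]; ring
      _ ≤ S * (1+u)^(2*j+1) := by
          rw [mul_comm S _]
          exact mul_le_mul_of_nonneg_left (hTmono (j+1) (by omega)) (by positivity)
  have hprodO : ∀ ω, (∀ k ∈ Finset.Icc 1 (2*n), |δ k ω| ≤ u) → ∀ j, j < n →
      |psiO j ω * δ (2*j+1) ω| ≤ S * (1+u)^(2*j) * u := by
    intro ω hω j hj
    rw [abs_mul]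
    exact mul_le_mul (hpOpt ω hω j hj) (hω (2*j+1) (Finset.mem_Icc.mpr ⟨by omega, by omega⟩))
      (abs_nonneg _) (by positivity)
  have hprodE : ∀ ω, (∀ k ∈ Finset.Icc 1 (2*n), |δ k ω| ≤ u) → ∀ j, j < n →
      |psiE j ω * δ (2*j+2) ω| ≤ S * (1+u)^(2*j+1) * u := by
    intro ω hω j hj
    rw [abs_mul]
    exact mul_le_mul (hpEpt ω hω j hj) (hω (2*j+2) (Finset.mem_Icc.mpr ⟨by omega, by omega⟩))
      (abs_nonneg _) (by positivity)
  set Z : ℝ := ∑ k ∈ Finset.range n, (S * (1+u)^(2*k) * u + S * (1+u)^(2*k+1) * u) with hZ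
  have hMpt : ∀ ω, (∀ k ∈ Finset.Icc 1 (2*n), |δ k ω| ≤ u) → ∀ j, j ≤ n →
      |M j ω| ≤ Z := by
    intro ω hω j hj
    calc |M j ω| ≤ ∑ k ∈ Finset.range j, |D k ω| := by
          rw [hM]; exact Finset.abs_sum_le_sum_abs _ _
      _ ≤ ∑ k ∈ Finset.range j, (S * (1+u)^(2*k) * u + S * (1+u)^(2*k+1) * u) := by
          apply Finset.sum_le_sum
          intro k hk
          rw [Finset.mem_range] at hk
          have hkn : k < n := by omega
          calc |D k ω| ≤ |psiO k ω * δ (2*k+1) ω| + |psiE k ω * δ (2*k+2) ω| := by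
                rw [hD]; exact abs_add_le _ _
            _ ≤ S * (1+u)^(2*k) * u + S * (1+u)^(2*k+1) * u :=
                add_le_add (hprodO ω hω k hkn) (hprodE ω hω k hkn)
      _ ≤ Z := by
          rw [hZ]
          apply Finset.sum_le_sum_of_subset_of_nonneg (Finset.range_subset_range.mpr hj)
          intro k _ _
          positivity
  -- strong measurability of M
  have hMm : ∀ j, j ≤ n → StronglyMeasurable[F (2*j)] (M j) := by
    intro j
    induction j with
    | zero =>
      intro _
      have : M 0 = fun _ => 0 := by funext ω; simp [hM]
      rw [this]; exact stronglyMeasurable_const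
    | succ j ih =>
      intro hj
      have hjlt : j < n := by omega
      have hMs : M (j+1) = fun ω => M j ω + D j ω := by
        funext ω; simp [hM, Finset.sum_range_succ]
      have e : 2*(j+1) = 2*j+2 := by omega
      rw [hMs, e]
      have h1 : StronglyMeasurable[F (2*j+2)] (M j) :=
        (ih (by omega)).mono (hFmono (by omega))
      have hDm : StronglyMeasurable[F (2*j+2)] (D j) := by
        have hO : StronglyMeasurable[F (2*j+2)] (psiO j) :=
          (hpsiOm j hjlt).mono (hFmono (by omega))
        have hE : StronglyMeasurable[F (2*j+2)] (psiE j) :=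
          (hpsiEm j hjlt).mono (hFmono (by omega))
        have hd1 : StronglyMeasurable[F (2*j+2)] (δ (2*j+1)) :=
          (hδFm (2*j+1) (2*j+2) (by omega) (by omega)).stronglyMeasurable
        have hd2 : StronglyMeasurable[F (2*j+2)] (δ (2*j+2)) :=
          (hδFm (2*j+2) (2*j+2) (by omega) (by omega)).stronglyMeasurable
        have : D j = fun ω => psiO j ω * δ (2*j+1) ω + psiE j ω * δ (2*j+2) ω := by
          funext ω; rw [hD]
        rw [this]
        exact (hO.mul hd1).add (hE.mul hd2)
      exact h1.add hDm
  -- MGF induction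
  set V : ℕ → ℝ := fun j => ∑ k ∈ Finset.range j,
    ((S*u*(1+u)^(2*k))^2 + (S*u*(1+u)^(2*k+1))^2) with hV
  have hmgf : ∀ t : ℝ, ∀ j, j ≤ n →
      ∫ ω, Real.exp (t * M j ω) ∂μ ≤ Real.exp (t^2 * V j / 2) := by
    intro t j
    induction j with
    | zero =>
      intro _
      have h1 : (fun ω => Real.exp (t * M 0 ω)) = fun _ => (1:ℝ) := by
        funext ω; simp [hM]
      rw [h1, integral_const]
      simp [hV]
    | succ j ih =>
      intro hj1
      have hjlt : j < n := by omega
      have ihx := ih (by omega)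
      set fO : Ω → ℝ := fun ω => Real.exp (t * M j ω) with hfO
      set fE : Ω → ℝ := fun ω => Real.exp (t * M j ω + t * (psiO j ω * δ (2*j+1) ω)) with hfE
      have hfOm : StronglyMeasurable[F (2*j)] fO :=
        Real.continuous_exp.comp_stronglyMeasurable ((hMm j (by omega)).const_mul t)
      have hfEm : StronglyMeasurable[F (2*j+1)] fE := by
        apply Real.continuous_exp.comp_stronglyMeasurable
        apply StronglyMeasurable.add
        · exact ((hMm j (by omega)).mono (hFmono (by omega))).const_mul t
        · exact (((hpsiOm j hjlt).mono (hFmono (by omega))).mul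
            (hδFm (2*j+1) (2*j+1) (by omega) le_rfl).stronglyMeasurable).const_mul t
      have hfOb : ∀ᵐ ω ∂μ, fO ω ≤ Real.exp (|t| * Z) := by
        filter_upwards [hball] with ω hω
        rw [hfO, Real.exp_le_exp]
        calc t * M j ω ≤ |t * M j ω| := le_abs_self _
          _ = |t| * |M j ω| := abs_mul _ _
          _ ≤ |t| * Z := mul_le_mul_of_nonneg_left (hMpt ω hω j (by omega)) (abs_nonneg t)
      have hfEb : ∀ᵐ ω ∂μ, fE ω ≤ Real.exp (|t| * Z + |t| * (S * (1+u)^(2*j) * u)) := by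
        filter_upwards [hball] with ω hω
        rw [hfE, Real.exp_le_exp]
        have h1 : t * M j ω ≤ |t| * Z := by
          calc t * M j ω ≤ |t * M j ω| := le_abs_self _
            _ = |t| * |M j ω| := abs_mul _ _
            _ ≤ |t| * Z := mul_le_mul_of_nonneg_left (hMpt ω hω j (by omega)) (abs_nonneg t)
        have h2 : t * (psiO j ω * δ (2*j+1) ω) ≤ |t| * (S * (1+u)^(2*j) * u) := by
          calc t * (psiO j ω * δ (2*j+1) ω) ≤ |t * (psiO j ω * δ (2*j+1) ω)| := le_abs_self _
            _ = |t| * |psiO j ω * δ (2*j+1) ω| := abs_mul _ _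
            _ ≤ |t| * (S * (1+u)^(2*j) * u) :=
                mul_le_mul_of_nonneg_left (hprodO ω hω j hjlt) (abs_nonneg t)
        linarith
      have hpsiObae : ∀ᵐ ω ∂μ, |psiO j ω| ≤ S * (1+u)^(2*j) := by
        filter_upwards [hball] with ω hω using hpOpt ω hω j hjlt
      have hpsiEbae : ∀ᵐ ω ∂μ, |psiE j ω| ≤ S * (1+u)^(2*j+1) := by
        filter_upwards [hball] with ω hω using hpEpt ω hω j hjlt
      have hcondO : μ[δ (2*j+1)|F (2*j)] =ᵐ[μ] fun _ => 0 := by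
        have h := hmi (2*j+1) (by omega) (by omega)
        rwa [(by omega : 2*j+1-1 = 2*j)] at h
      have hcondE : μ[δ (2*j+2)|F (2*j+1)] =ᵐ[μ] fun _ => 0 := by
        have h := hmi (2*j+2) (by omega) (by omega)
        rwa [(by omega : 2*j+2-1 = 2*j+1)] at h
      have hδu1 : ∀ᵐ ω ∂μ, |δ (2*j+1) ω| ≤ u := hδb (2*j+1) (by omega) (by omega)
      have hδu2 : ∀ᵐ ω ∂μ, |δ (2*j+2) ω| ≤ u := hδb (2*j+2) (by omega) (by omega)
      have hstepE := sr15_step (μ := μ) (hFle (2*j+1)) hfEm (fun ω => (Real.exp_pos _).le)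
        hfEb (hpsiEm j hjlt) (by positivity : (0:ℝ) ≤ S * (1+u)^(2*j+1)) hpsiEbae
        (hδm (2*j+2)) hu hδu2 hcondE t
      have hstepO := sr15_step (μ := μ) (hFle (2*j)) hfOm (fun ω => (Real.exp_pos _).le)
        hfOb (hpsiOm j hjlt) (by positivity : (0:ℝ) ≤ S * (1+u)^(2*j)) hpsiObae
        (hδm (2*j+1)) hu hδu1 hcondO t
      have heq1 : (fun ω => Real.exp (t * M (j+1) ω))
          = fun ω => fE ω * Real.exp (t * (psiE j ω * δ (2*j+2) ω)) := by
        funext ω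
        rw [hfE, ← Real.exp_add]
        congr 1
        have hMs : M (j+1) ω = M j ω + D j ω := by simp [hM, Finset.sum_range_succ]
        rw [hMs, hD]
        ring
      have heq2 : (fun ω => fE ω) = fun ω => fO ω * Real.exp (t * (psiO j ω * δ (2*j+1) ω)) := by
        funext ω
        rw [hfE, hfO, ← Real.exp_add]
      calc ∫ ω, Real.exp (t * M (j+1) ω) ∂μ
          = ∫ ω, fE ω * Real.exp (t * (psiE j ω * δ (2*j+2) ω)) ∂μ := by rw [heq1]
        _ ≤ Real.exp ((t * (S * (1+u)^(2*j+1)) * u)^2/2) * ∫ ω, fE ω ∂μ := hstepE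
        _ = Real.exp ((t * (S * (1+u)^(2*j+1)) * u)^2/2)
            * ∫ ω, fO ω * Real.exp (t * (psiO j ω * δ (2*j+1) ω)) ∂μ := by rw [← heq2]
        _ ≤ Real.exp ((t * (S * (1+u)^(2*j+1)) * u)^2/2)
            * (Real.exp ((t * (S * (1+u)^(2*j)) * u)^2/2) * ∫ ω, fO ω ∂μ) := by
            apply mul_le_mul_of_nonneg_left hstepO (Real.exp_pos _).le
        _ ≤ Real.exp ((t * (S * (1+u)^(2*j+1)) * u)^2/2)
            * (Real.exp ((t * (S * (1+u)^(2*j)) * u)^2/2) * Real.exp (t^2 * V j / 2)) := by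
            apply mul_le_mul_of_nonneg_left _ (Real.exp_pos _).le
            exact mul_le_mul_of_nonneg_left ihx (Real.exp_pos _).le
        _ = Real.exp (t^2 * V (j+1) / 2) := by
            rw [← Real.exp_add, ← Real.exp_add]
            congr 1
            have hVs : V (j+1) = V j + ((S*u*(1+u)^(2*j))^2 + (S*u*(1+u)^(2*j+1))^2) := by
              simp [hV, Finset.sum_range_succ]
            rw [hVs]
            ring
  -- case split on S = 0
  rcases eq_or_lt_of_le hS0 with hSz | hSpos
  · -- degenerate case S = 0
    have hSeq : S = 0 := hSz.symm
    have hsum0 : ∑ j ∈ Finset.range (n+1), |a j * x ^ j| = 0 := by rw [← hSdef]; exact hSeq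
    have haz : ∀ i, i ≤ n → a i = 0 := by
      intro i hi
      have hall := (Finset.sum_eq_zero_iff_of_nonneg
        (fun j _ => abs_nonneg (a j * x ^ j))).mp hsum0
      have h := hall i (Finset.mem_range.mpr (by omega))
      have h2 : a i * x ^ i = 0 := abs_eq_zero.mp h
      rcases mul_eq_zero.mp h2 with h3 | h3
      · exact h3
      · exact absurd h3 (pow_ne_zero i hx)
    have hP0 : P = 0 := by
      rw [hP]
      apply Finset.sum_eq_zero
      intro i hi
      rw [haz i (Nat.lt_succ_iff.mp (Finset.mem_range.mp hi))]
      ring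
    have hr0 : ∀ j, j ≤ n → ∀ ω, rhat (2*j) ω = 0 := by
      intro j
      induction j with
      | zero =>
        intro _ ω
        simpa using (h0 ω).trans (haz n le_rfl)
      | succ j ih =>
        intro hj ω
        have hjlt : j < n := by omega
        have e : 2*(j+1) = 2*j+2 := by omega
        rw [e, heven' j hjlt ω, hodd' j hjlt ω, ih (by omega) ω, haz (n-(j+1)) (by omega)]
        ring
    have hset : {ω | |rhat (2 * n) ω - P|
        ≤ S * Real.sqrt (u * ((1 + u) ^ (4 * n) - 1) / (2 + u))
          * Real.sqrt (2 * Real.log (2 / lam))} = Set.univ := by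
      apply Set.eq_univ_iff_forall.mpr
      intro ω
      simp only [Set.mem_setOf_eq]
      rw [hr0 n le_rfl ω, hP0, hSeq]
      simp
    rw [hset, measure_univ]
    exact ENNReal.ofReal_le_one.mpr (by linarith)
  · -- main case
    set L := Real.log (2 / lam) with hLdef
    set q := u * ((1 + u) ^ (4 * n) - 1) / (2 + u) with hqdef
    have hLpos : 0 < L := Real.log_pos (by rw [lt_div_iff₀ hlam0]; linarith)
    have hγpos : 0 < (1+u)^(4*n) - 1 := by
      have h1 : (1:ℝ) < (1+u)^(4*n) := one_lt_pow₀ (by linarith) (by omega)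
      linarith
    have hqpos : 0 < q := by rw [hqdef]; exact div_pos (mul_pos hu hγpos) (by linarith)
    have hVn : V n = S^2 * q := by
      simp only [hV, hqdef]
      have hterm : ∀ k ∈ Finset.range n, (S*u*(1+u)^(2*k))^2 + (S*u*(1+u)^(2*k+1))^2
          = (S*u)^2 * (((1+u)^2)^(2*k) + ((1+u)^2)^(2*k+1)) := by
        intro k _
        have h1 : (((1:ℝ)+u)^(2*k))^2 = ((1+u)^2)^(2*k) := by
          rw [← pow_mul, ← pow_mul, mul_comm]
        have h2 : (((1:ℝ)+u)^(2*k+1))^2 = ((1+u)^2)^(2*k+1) := by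
          rw [← pow_mul, ← pow_mul, mul_comm]
        rw [mul_pow, mul_pow, mul_pow, mul_pow, h1, h2]
        ring
      rw [Finset.sum_congr rfl hterm, ← Finset.mul_sum, sr15_pair_sum]
      have hr1 : ((1:ℝ)+u)^2 ≠ 1 := by nlinarith
      rw [geom_sum_eq hr1 (2*n)]
      have hpw : (((1:ℝ)+u)^2)^(2*n) = (1+u)^(4*n) := by
        rw [← pow_mul]
        congr 1
        omega
      rw [hpw]
      have hden : ((1:ℝ)+u)^2 - 1 = u*(2+u) := by ring
      rw [hden]
      have h2u : (2:ℝ) + u ≠ 0 := by linarith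
      field_simp
    have hVpos : 0 < V n := by rw [hVn]; exact mul_pos (by positivity) hqpos
    set ε : ℝ := S * Real.sqrt q * Real.sqrt (2 * L) with hεdef
    have h2L : (0:ℝ) ≤ 2*L := by positivity
    have hε2 : ε^2 = V n * (2*L) := by
      calc ε^2 = S^2 * (Real.sqrt q ^ 2) * (Real.sqrt (2*L) ^ 2) := by rw [hεdef]; ring
        _ = S^2 * q * (2*L) := by rw [Real.sq_sqrt hqpos.le, Real.sq_sqrt h2L]
        _ = V n * (2*L) := by rw [hVn]
    have hεpos : 0 < ε := by
      rw [hεdef]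
      exact mul_pos (mul_pos hSpos (Real.sqrt_pos.mpr hqpos))
        (Real.sqrt_pos.mpr (show (0:ℝ) < 2*L by linarith))
    set t0 : ℝ := ε / V n with ht0def
    have ht0pos : 0 ≤ t0 := le_of_lt (by rw [ht0def]; exact div_pos hεpos hVpos)
    have hMnmeas : Measurable (M n) := ((hMm n le_rfl).measurable).mono (hFle (2*n)) le_rfl
    have hint : ∀ s : ℝ, Integrable (fun ω => Real.exp (s * M n ω)) μ := by
      intro s
      apply (integrable_const (Real.exp (|s| * Z))).mono'
      · exact ((hMnmeas.const_mul s).exp).aestronglyMeasurable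
      · filter_upwards [hball] with ω hω
        rw [Real.norm_eq_abs, abs_of_pos (Real.exp_pos _), Real.exp_le_exp]
        calc s * M n ω ≤ |s * M n ω| := le_abs_self _
          _ = |s| * |M n ω| := abs_mul _ _
          _ ≤ |s| * Z := mul_le_mul_of_nonneg_left (hMpt ω hω n le_rfl) (abs_nonneg s)
    have hexp_arg : -t0 * ε + t0 ^ 2 * V n / 2 = -L := by
      have hVne : V n ≠ 0 := hVpos.ne'
      have ht0V : t0 * V n = ε := by rw [ht0def]; exact div_mul_cancel₀ ε hVne
      have h1 : t0 * ε = 2*L := by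
        rw [ht0def, div_mul_eq_mul_div, ← sq, hε2, mul_comm (V n) (2*L), mul_div_assoc,
          div_self hVne, mul_one]
      have h2 : t0 ^ 2 * V n = t0 * ε := by rw [sq, mul_assoc, ht0V]
      rw [h2, neg_mul, h1]
      ring
    have hexpval : Real.exp (-t0 * ε) * Real.exp (t0^2 * V n / 2) = Real.exp (-L) := by
      rw [← Real.exp_add, hexp_arg]
    have hlamhalf : Real.exp (-L) = lam / 2 := by
      rw [Real.exp_neg, hLdef, Real.exp_log (div_pos two_pos hlam0), inv_div]
    have hmgfle : ∀ s : ℝ, mgf (M n) μ s ≤ Real.exp (s^2 * V n / 2) := fun s => hmgf s n le_rfl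
    have hup : μ {ω | ε ≤ M n ω} ≤ ENNReal.ofReal (lam/2) := by
      have h1 := measure_ge_le_exp_mul_mgf (X := M n) (μ := μ) (t := t0) ε ht0pos (hint t0)
      have h3 : (μ {ω | ε ≤ M n ω}).toReal ≤ lam / 2 := by
        refine h1.trans ?_
        rw [← hlamhalf, ← hexpval]
        exact mul_le_mul_of_nonneg_left (hmgfle t0) (Real.exp_pos _).le
      rw [← ENNReal.ofReal_toReal (measure_ne_top μ _)]
      exact ENNReal.ofReal_le_ofReal h3
    have hdown : μ {ω | M n ω ≤ -ε} ≤ ENNReal.ofReal (lam/2) := by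
      have h1 := measure_le_le_exp_mul_mgf (X := M n) (μ := μ) (t := -t0) (-ε)
        (by linarith) (hint (-t0))
      have h3 : (μ {ω | M n ω ≤ -ε}).toReal ≤ lam / 2 := by
        refine h1.trans ?_
        have he1 : -(-t0) * (-ε) = -t0 * ε := by ring
        have he2 : (-t0)^2 = t0^2 := by ring
        rw [he1, ← hlamhalf, ← hexpval]
        apply mul_le_mul_of_nonneg_left _ (Real.exp_pos _).le
        calc mgf (M n) μ (-t0) ≤ Real.exp ((-t0)^2 * V n / 2) := hmgfle (-t0)
          _ = Real.exp (t0^2 * V n / 2) := by rw [he2]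
      rw [← ENNReal.ofReal_toReal (measure_ne_top μ _)]
      exact ENNReal.ofReal_le_ofReal h3
    have hr2nm : Measurable (rhat (2*n)) := ((hrm n le_rfl).1).mono (hFle (2*n)) le_rfl
    have hEmeas : MeasurableSet {ω | |rhat (2*n) ω - P| ≤ ε} :=
      measurableSet_le ((hr2nm.sub measurable_const).abs) measurable_const
    have hsub : {ω | |rhat (2*n) ω - P| ≤ ε}ᶜ ⊆ {ω | ε ≤ M n ω} ∪ {ω | M n ω ≤ -ε} := by
      intro ω hω
      simp only [Set.mem_compl_iff, Set.mem_setOf_eq, not_le] at hω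
      rw [herr ω] at hω
      rcases lt_abs.mp hω with h | h
      · exact Or.inl h.le
      · exact Or.inr (by simp only [Set.mem_setOf_eq]; linarith)
    have hcompl : μ {ω | |rhat (2*n) ω - P| ≤ ε}ᶜ ≤ ENNReal.ofReal lam := by
      calc μ {ω | |rhat (2*n) ω - P| ≤ ε}ᶜ
          ≤ μ ({ω | ε ≤ M n ω} ∪ {ω | M n ω ≤ -ε}) := measure_mono hsub
        _ ≤ μ {ω | ε ≤ M n ω} + μ {ω | M n ω ≤ -ε} := measure_union_le _ _
        _ ≤ ENNReal.ofReal (lam/2) + ENNReal.ofReal (lam/2) := add_le_add hup hdown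
        _ = ENNReal.ofReal lam := by
            rw [← ENNReal.ofReal_add (by positivity) (by positivity)]
            norm_num
    have hsum1 : μ {ω | |rhat (2*n) ω - P| ≤ ε} + μ {ω | |rhat (2*n) ω - P| ≤ ε}ᶜ = 1 := by
      rw [measure_add_measure_compl hEmeas, measure_univ]
    have hkey : ENNReal.ofReal (1 - lam) + ENNReal.ofReal lam
        ≤ μ {ω | |rhat (2*n) ω - P| ≤ ε} + ENNReal.ofReal lam := by
      rw [← ENNReal.ofReal_add (by linarith) hlam0.le]
      have he : (1 - lam) + lam = (1:ℝ) := by ring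
      rw [he, ENNReal.ofReal_one, ← hsum1]
      exact add_le_add_right hcompl _
    exact (ENNReal.add_le_add_iff_right ENNReal.ofReal_ne_top).mp hkey
end

section
/- Under the stochastic Horner model with x ≠ 0 and P(x) ≠ 0, for every 0 < λ < 1, with probability at least 1 − λ the relative forward error satisfies |r̂_{2n} − P(x)| / |P(x)| ≤ cond_1(P,x) · √(u·γ_{4n}) · √(ln(2/λ)), where cond_1(P,x) = (Σ_{i=0}^{n} |a_i x^i|)/|P(x)| and γ_{4n} = (1+u)^{4n} − 1. -/
open MeasureTheory ProbabilityTheory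

section AzumaAux

variable {Ω : Type*} {m0 : MeasurableSpace Ω} {μ : Measure Ω} [IsProbabilityMeasure μ]

private lemma exp_le_cosh_aux (s c d : ℝ) (hc : 0 < c) (hd : |d| ≤ c) :
    Real.exp (s * d) ≤ Real.cosh (s * c) + (Real.sinh (s * c) / c) * d := by
  obtain ⟨h1, h2⟩ := abs_le.1 hd
  have key := convexOn_exp.2 (Set.mem_univ (-(s * c))) (Set.mem_univ (s * c))
    (show (0:ℝ) ≤ (c - d) / (2 * c) from div_nonneg (by linarith) (by linarith))
    (show (0:ℝ) ≤ (c + d) / (2 * c) from div_nonneg (by linarith) (by linarith))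
    (by field_simp; ring)
  simp only [smul_eq_mul] at key
  have harg : (c - d) / (2 * c) * -(s * c) + (c + d) / (2 * c) * (s * c) = s * d := by
    field_simp
    ring
  rw [harg] at key
  refine key.trans (le_of_eq ?_)
  rw [Real.cosh_eq, Real.sinh_eq]
  field_simp
  ring

omit [IsProbabilityMeasure μ] in
private lemma ae_finset_forall {p : ℕ → Ω → Prop} (S : Finset ℕ)
    (h : ∀ m ∈ S, ∀ᵐ ω ∂μ, p m ω) : ∀ᵐ ω ∂μ, ∀ m ∈ S, p m ω := by
  classical
  induction S using Finset.induction_on with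
  | empty => simp
  | @insert b S hb ih =>
    filter_upwards [h b (Finset.mem_insert_self _ _),
      ih fun m hm => h m (Finset.mem_insert_of_mem hm)] with ω h1 h2
    intro m hm
    rcases Finset.mem_insert.1 hm with rfl | hm
    · exact h1
    · exact h2 m hm

private lemma norm_exp_mul_le {s y C : ℝ} (h : |y| ≤ C) :
    ‖Real.exp (s * y)‖ ≤ Real.exp (|s| * C) := by
  rw [Real.norm_eq_abs, Real.abs_exp]
  apply Real.exp_le_exp.2
  calc s * y ≤ |s * y| := le_abs_self _
    _ = |s| * |y| := abs_mul _ _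
    _ ≤ |s| * C := mul_le_mul_of_nonneg_left h (abs_nonneg s)

private lemma condExp_exp_le_of_bdd {F' : MeasurableSpace Ω} (hle : F' ≤ m0)
    (D : Ω → ℝ) (hD : AEStronglyMeasurable[m0] D μ) (c s : ℝ) (hc : 0 ≤ c)
    (hbd : ∀ᵐ ω ∂μ, |D ω| ≤ c) (hcond : μ[D | F'] =ᵐ[μ] fun _ => 0) :
    μ[fun ω => Real.exp (s * D ω) | F'] ≤ᵐ[μ] fun _ => Real.exp (s ^ 2 * c ^ 2 / 2) := by
  have hDint : Integrable D μ :=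
    Integrable.mono' (integrable_const c) hD (by filter_upwards [hbd] with ω h; simpa using h)
  have hexp_asm : AEStronglyMeasurable[m0] (fun ω => Real.exp (s * D ω)) μ :=
    Real.continuous_exp.comp_aestronglyMeasurable (hD.const_mul s)
  have hexp_bd : ∀ᵐ ω ∂μ, ‖Real.exp (s * D ω)‖ ≤ Real.exp (|s| * c) := by
    filter_upwards [hbd] with ω hω; exact norm_exp_mul_le hω
  have hexp_int : Integrable (fun ω => Real.exp (s * D ω)) μ :=
    Integrable.mono' (integrable_const _) hexp_asm hexp_bd
  rcases eq_or_lt_of_le hc with hc0 | hcpos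
  · have hD0 : D =ᵐ[μ] fun _ => (0:ℝ) := by
      filter_upwards [hbd] with ω hω
      have : |D ω| ≤ 0 := by rw [hc0]; exact hω
      exact abs_eq_zero.1 (le_antisymm this (abs_nonneg _))
    have h1 : μ[fun ω => Real.exp (s * D ω) | F'] =ᵐ[μ] μ[(fun _ => (1:ℝ)) | F'] := by
      refine condExp_congr_ae ?_
      filter_upwards [hD0] with ω hω
      simp [hω]
    have h2 : μ[(fun _ => (1:ℝ)) | F'] = fun _ => (1:ℝ) := condExp_const hle 1
    filter_upwards [h1] with ω hω
    rw [hω, h2]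
    exact Real.one_le_exp (by positivity)
  · set k := Real.sinh (s * c) / c with hk
    have hmaj : (fun ω => Real.exp (s * D ω)) ≤ᵐ[μ]
        (fun _ => Real.cosh (s * c)) + k • D := by
      filter_upwards [hbd] with ω hω
      simpa [hk, Pi.add_apply, Pi.smul_apply, smul_eq_mul] using
        exp_le_cosh_aux s c (D ω) hcpos hω
    have hgint : Integrable ((fun _ => Real.cosh (s * c)) + k • D) μ :=
      (integrable_const _).add (hDint.smul k)
    have h1 := condExp_mono (m := F') hexp_int hgint hmaj
    have h2 : μ[(fun _ => Real.cosh (s * c)) + k • D | F'] =ᵐ[μ]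
        fun _ => Real.cosh (s * c) := by
      refine (condExp_add (μ := μ) (integrable_const _) (hDint.smul k) F').trans ?_
      have e1 : μ[(fun _ : Ω => Real.cosh (s * c)) | F'] = fun _ => Real.cosh (s * c) :=
        condExp_const hle _
      have e2 : μ[k • D | F'] =ᵐ[μ] fun _ => (0:ℝ) := by
        refine (condExp_smul k D F').trans ?_
        filter_upwards [hcond] with ω hω
        simp [hω]
      filter_upwards [e2] with ω hω
      simp [e1, hω]
    have h3 : Real.cosh (s * c) ≤ Real.exp (s ^ 2 * c ^ 2 / 2) := by
      have := Real.cosh_le_exp_half_sq (s * c)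
      rwa [mul_pow] at this
    calc μ[fun ω => Real.exp (s * D ω) | F']
        ≤ᵐ[μ] μ[(fun _ => Real.cosh (s * c)) + k • D | F'] := h1
      _ =ᵐ[μ] fun _ => Real.cosh (s * c) := h2
      _ ≤ᵐ[μ] fun _ => Real.exp (s ^ 2 * c ^ 2 / 2) := Filter.Eventually.of_forall fun _ => h3

end AzumaAux

section AzumaCore

variable {Ω : Type*} {m0 : MeasurableSpace Ω} {μ : Measure Ω} [IsProbabilityMeasure μ]

private lemma mgf_sum_le (F : ℕ → MeasurableSpace Ω) (hle : ∀ m, F m ≤ m0)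
    (hmono : Monotone F) (D : ℕ → Ω → ℝ) (c : ℕ → ℝ) (hc : ∀ m, 0 ≤ c m) (s : ℝ) :
    ∀ M : ℕ,
    (∀ m ∈ Finset.Icc 1 M, Measurable[F m] (D m)) →
    (∀ m ∈ Finset.Icc 1 M, ∀ᵐ ω ∂μ, |D m ω| ≤ c m) →
    (∀ m ∈ Finset.Icc 1 M, μ[D m | F (m - 1)] =ᵐ[μ] fun _ => 0) →
    ∫ ω, Real.exp (s * ∑ m ∈ Finset.Icc 1 M, D m ω) ∂μ
      ≤ Real.exp (s ^ 2 * (∑ m ∈ Finset.Icc 1 M, c m ^ 2) / 2) := by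
  intro M
  induction M with
  | zero =>
    intro _ _ _
    rw [show Finset.Icc 1 0 = ∅ from Finset.Icc_eq_empty (by omega)]
    simp
  | succ M ih =>
    intro hmeas hbd hcond
    have hsub : ∀ m ∈ Finset.Icc 1 M, m ∈ Finset.Icc 1 (M + 1) := fun m hm => by
      rw [Finset.mem_Icc] at *; omega
    have ihle := ih (fun m hm => hmeas m (hsub m hm)) (fun m hm => hbd m (hsub m hm))
      (fun m hm => hcond m (hsub m hm))
    set Sf : Ω → ℝ := fun ω => ∑ m ∈ Finset.Icc 1 M, D m ω with hSf
    set C : ℝ := ∑ m ∈ Finset.Icc 1 M, c m with hC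
    have hSmeas : Measurable[F M] Sf :=
      Finset.measurable_sum _ fun m hm =>
        (hmeas m (hsub m hm)).mono (hmono (Finset.mem_Icc.1 hm).2) le_rfl
    have hSbd : ∀ᵐ ω ∂μ, |Sf ω| ≤ C := by
      filter_upwards [ae_finset_forall _ fun m hm => hbd m (hsub m hm)] with ω hω
      calc |Sf ω| ≤ ∑ m ∈ Finset.Icc 1 M, |D m ω| := Finset.abs_sum_le_sum_abs _ _
        _ ≤ C := Finset.sum_le_sum hω
    have hf_sm : StronglyMeasurable[F M] (fun ω => Real.exp (s * Sf ω)) :=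
      (Real.measurable_exp.comp (hSmeas.const_mul s)).stronglyMeasurable
    have hf_bd : ∀ᵐ ω ∂μ, ‖Real.exp (s * Sf ω)‖ ≤ Real.exp (|s| * C) := by
      filter_upwards [hSbd] with ω hω; exact norm_exp_mul_le hω
    have hf_asm : AEStronglyMeasurable (fun ω => Real.exp (s * Sf ω)) μ :=
      (hf_sm.mono (hle M)).aestronglyMeasurable
    have hf_int : Integrable (fun ω => Real.exp (s * Sf ω)) μ :=
      Integrable.mono' (integrable_const _) hf_asm hf_bd
    have hMmem : M + 1 ∈ Finset.Icc 1 (M + 1) := by rw [Finset.mem_Icc]; omega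
    have hg_asm : AEStronglyMeasurable (fun ω => Real.exp (s * D (M+1) ω)) μ :=
      (Real.measurable_exp.comp
        (((hmeas _ hMmem).mono (hle (M+1)) le_rfl).const_mul s)).aestronglyMeasurable
    have hg_bd : ∀ᵐ ω ∂μ, ‖Real.exp (s * D (M+1) ω)‖ ≤ Real.exp (|s| * c (M+1)) := by
      filter_upwards [hbd _ hMmem] with ω hω; exact norm_exp_mul_le hω
    have hg_int : Integrable (fun ω => Real.exp (s * D (M+1) ω)) μ :=
      Integrable.mono' (integrable_const _) hg_asm hg_bd
    have hfg_int : Integrable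
        ((fun ω => Real.exp (s * Sf ω)) * fun ω => Real.exp (s * D (M+1) ω)) μ :=
      hg_int.bdd_mul hf_asm hf_bd
    have hpull := condExp_stronglyMeasurable_mul_of_bound (hle M) hf_sm hg_int _ hf_bd
    have hstep : μ[(fun ω => Real.exp (s * D (M+1) ω)) | F M] ≤ᵐ[μ]
        fun _ => Real.exp (s ^ 2 * c (M+1) ^ 2 / 2) := by
      have hcnd := hcond _ hMmem
      rw [show M + 1 - 1 = M from rfl] at hcnd
      exact condExp_exp_le_of_bdd (hle M)
        (D (M+1)) ((hmeas _ hMmem).mono (hle (M+1)) le_rfl).aestronglyMeasurable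
        (c (M+1)) s (hc _) (hbd _ hMmem) hcnd
    have hsplit : ∀ ω, ∑ m ∈ Finset.Icc 1 (M+1), D m ω = Sf ω + D (M+1) ω := fun ω =>
      Finset.sum_Icc_succ_top (by omega) _
    calc ∫ ω, Real.exp (s * ∑ m ∈ Finset.Icc 1 (M+1), D m ω) ∂μ
        = ∫ ω, ((fun ω => Real.exp (s * Sf ω)) * fun ω => Real.exp (s * D (M+1) ω)) ω ∂μ := by
          refine integral_congr_ae (Filter.Eventually.of_forall fun ω => ?_)
          simp only [Pi.mul_apply]
          rw [hsplit ω, mul_add, Real.exp_add]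
      _ = ∫ ω, (μ[(fun ω => Real.exp (s * Sf ω)) * fun ω => Real.exp (s * D (M+1) ω) | F M]) ω ∂μ :=
          (integral_condExp (μ := μ) (hle M)).symm
      _ = ∫ ω, Real.exp (s * Sf ω) * (μ[(fun ω => Real.exp (s * D (M+1) ω)) | F M]) ω ∂μ := by
          refine integral_congr_ae ?_
          filter_upwards [hpull] with ω hω
          simpa using hω
      _ ≤ ∫ ω, Real.exp (s * Sf ω) * Real.exp (s ^ 2 * c (M+1) ^ 2 / 2) ∂μ := by
          refine integral_mono_ae (integrable_condExp.bdd_mul hf_asm hf_bd)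
            (hf_int.mul_const _) ?_
          filter_upwards [hstep] with ω hω
          exact mul_le_mul_of_nonneg_left hω (le_of_lt (Real.exp_pos _))
      _ = Real.exp (s ^ 2 * c (M+1) ^ 2 / 2) * ∫ ω, Real.exp (s * Sf ω) ∂μ := by
          rw [integral_mul_const]; ring
      _ ≤ Real.exp (s ^ 2 * c (M+1) ^ 2 / 2)
            * Real.exp (s ^ 2 * (∑ m ∈ Finset.Icc 1 M, c m ^ 2) / 2) :=
          mul_le_mul_of_nonneg_left ihle (le_of_lt (Real.exp_pos _))
      _ = Real.exp (s ^ 2 * (∑ m ∈ Finset.Icc 1 (M+1), c m ^ 2) / 2) := by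
          rw [← Real.exp_add, Finset.sum_Icc_succ_top (show 1 ≤ M + 1 by omega)]
          congr 1
          ring

private lemma azuma_tail (F : ℕ → MeasurableSpace Ω) (hle : ∀ m, F m ≤ m0)
    (hmono : Monotone F) (D : ℕ → Ω → ℝ) (c : ℕ → ℝ) (hc : ∀ m, 0 ≤ c m) (M : ℕ)
    (hmeas : ∀ m ∈ Finset.Icc 1 M, Measurable[F m] (D m))
    (hbd : ∀ m ∈ Finset.Icc 1 M, ∀ᵐ ω ∂μ, |D m ω| ≤ c m)
    (hcond : ∀ m ∈ Finset.Icc 1 M, μ[D m | F (m - 1)] =ᵐ[μ] fun _ => 0)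
    (t V : ℝ) (ht : 0 < t) (hV : 0 < V) (hcV : ∑ m ∈ Finset.Icc 1 M, c m ^ 2 ≤ V) :
    μ {ω | t ≤ ∑ m ∈ Finset.Icc 1 M, D m ω}
      ≤ ENNReal.ofReal (Real.exp (-(t ^ 2) / (2 * V))) := by
  set s : ℝ := t / V with hs
  have hs0 : 0 ≤ s := le_of_lt (div_pos ht hV)
  set Sf : Ω → ℝ := fun ω => ∑ m ∈ Finset.Icc 1 M, D m ω with hSf
  have hSmeas : Measurable Sf :=
    Finset.measurable_sum _ fun m hm => (hmeas m hm).mono (hle m) le_rfl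
  have hSbd : ∀ᵐ ω ∂μ, |Sf ω| ≤ ∑ m ∈ Finset.Icc 1 M, c m := by
    filter_upwards [ae_finset_forall _ hbd] with ω hω
    calc |Sf ω| ≤ ∑ m ∈ Finset.Icc 1 M, |D m ω| := Finset.abs_sum_le_sum_abs _ _
      _ ≤ _ := Finset.sum_le_sum hω
  have hint : Integrable (fun ω => Real.exp (s * Sf ω)) μ := by
    refine Integrable.mono' (integrable_const (Real.exp (|s| * ∑ m ∈ Finset.Icc 1 M, c m)))
      (Real.measurable_exp.comp (hSmeas.const_mul s)).aestronglyMeasurable ?_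
    filter_upwards [hSbd] with ω hω; exact norm_exp_mul_le hω
  have hmgf := measure_ge_le_exp_mul_mgf (μ := μ) (X := Sf) t hs0 hint
  have hmgf_le : mgf Sf μ s ≤ Real.exp (s ^ 2 * (∑ m ∈ Finset.Icc 1 M, c m ^ 2) / 2) :=
    mgf_sum_le F hle hmono D c hc s M hmeas hbd hcond
  have hchain : Real.exp (-s * t) * mgf Sf μ s ≤ Real.exp (-(t ^ 2) / (2 * V)) := by
    calc Real.exp (-s * t) * mgf Sf μ s
        ≤ Real.exp (-s * t) * Real.exp (s ^ 2 * (∑ m ∈ Finset.Icc 1 M, c m ^ 2) / 2) :=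
          mul_le_mul_of_nonneg_left hmgf_le (le_of_lt (Real.exp_pos _))
      _ = Real.exp (-s * t + s ^ 2 * (∑ m ∈ Finset.Icc 1 M, c m ^ 2) / 2) :=
          (Real.exp_add _ _).symm
      _ ≤ Real.exp (-(t ^ 2) / (2 * V)) := by
          apply Real.exp_le_exp.2
          have h1 : s ^ 2 * (∑ m ∈ Finset.Icc 1 M, c m ^ 2) / 2 ≤ s ^ 2 * V / 2 := by
            have := mul_le_mul_of_nonneg_left hcV (sq_nonneg s)
            linarith
          have h2 : -s * t + s ^ 2 * V / 2 = -(t ^ 2) / (2 * V) := by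
            rw [hs]
            field_simp
            ring
          linarith
  calc μ {ω | t ≤ Sf ω} = ENNReal.ofReal ((μ {ω | t ≤ Sf ω}).toReal) :=
        (ENNReal.ofReal_toReal (measure_ne_top μ _)).symm
    _ ≤ ENNReal.ofReal (Real.exp (-(t ^ 2) / (2 * V))) :=
        ENNReal.ofReal_le_ofReal (hmgf.trans hchain)

end AzumaCore

set_option maxHeartbeats 1000000 in
/-- Probabilistic relative forward error bound for Horner's rule
under SR-nearness: if `P(x) ≠ 0` then for every `0 < λ < 1`, with probability
at least `1 − λ`,
`|r̂_{2n} − P(x)|/|P(x)| ≤ cond₁(P,x)·√(u·γ_{4n})·√(ln(2/λ))`,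
where `cond₁(P,x) = (Σ_{i=0}^n |a_i x^i|)/|P(x)|` and `γ_{4n} = (1+u)^{4n} − 1`. -/
theorem stmt_16 {Ω : Type*} [MeasurableSpace Ω] {μ : Measure Ω}
    [IsProbabilityMeasure μ]
    (n : ℕ) (hn : 1 ≤ n) (x : ℝ) (hx : x ≠ 0) (a : ℕ → ℝ) (u : ℝ) (hu : 0 < u)
    (hP : (∑ i ∈ Finset.range (n + 1), a i * x ^ i) ≠ 0)
    (δ : ℕ → Ω → ℝ) (hδm : ∀ k, Measurable (δ k))
    (hδb : ∀ k, 1 ≤ k → k ≤ 2 * n → ∀ᵐ ω ∂μ, |δ k ω| ≤ u)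
    (F : ℕ → MeasurableSpace Ω)
    (hF : ∀ i, F i = ⨆ j ∈ Finset.Icc 1 i,
      MeasurableSpace.comap (δ j) Real.measurableSpace)
    (hmi : ∀ k, 1 ≤ k → k ≤ 2 * n → μ[δ k | F (k - 1)] =ᵐ[μ] fun _ => 0)
    (rhat : ℕ → Ω → ℝ)
    (h0 : ∀ ω, rhat 0 ω = a n)
    (hodd : ∀ k, 1 ≤ k → k ≤ n → ∀ ω,
      rhat (2 * k - 1) ω = rhat (2 * k - 2) ω * x * (1 + δ (2 * k - 1) ω))
    (heven : ∀ k, 1 ≤ k → k ≤ n → ∀ ω,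
      rhat (2 * k) ω = (rhat (2 * k - 1) ω + a (n - k)) * (1 + δ (2 * k) ω))
    (lam : ℝ) (hlam0 : 0 < lam) (hlam1 : lam < 1) :
    ENNReal.ofReal (1 - lam) ≤
      μ {ω | |rhat (2 * n) ω - ∑ i ∈ Finset.range (n + 1), a i * x ^ i|
              / |∑ i ∈ Finset.range (n + 1), a i * x ^ i|
        ≤ ((∑ i ∈ Finset.range (n + 1), |a i * x ^ i|)
              / |∑ i ∈ Finset.range (n + 1), a i * x ^ i|)
            * Real.sqrt (u * ((1 + u) ^ (4 * n) - 1))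
            * Real.sqrt (Real.log (2 / lam))} := by
  classical
  set P : ℝ := ∑ i ∈ Finset.range (n + 1), a i * x ^ i with hPdef
  set A : ℝ := ∑ i ∈ Finset.range (n + 1), |a i * x ^ i| with hAdef
  set γ : ℝ := (1 + u) ^ (4 * n) - 1 with hγdef
  set L : ℝ := Real.log (2 / lam) with hLdef
  have hPabs : 0 < |P| := abs_pos.2 hP
  have hPA : |P| ≤ A := by rw [hPdef, hAdef]; exact Finset.abs_sum_le_sum_abs _ _
  have hApos : 0 < A := lt_of_lt_of_le hPabs hPA
  have hupos : (0:ℝ) < 1 + u := by linarith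
  have honep : ∀ m : ℕ, (1:ℝ) ≤ (1 + u) ^ m := fun m => one_le_pow₀ (by linarith)
  have hγpos : 0 < γ := by
    rw [hγdef]
    have : (1:ℝ) < (1 + u) ^ (4 * n) := one_lt_pow₀ (by linarith) (by omega)
    linarith
  have hLpos : 0 < L := by
    rw [hLdef]
    apply Real.log_pos
    rw [lt_div_iff₀ hlam0]
    linarith
  -- the weighted partial sums of |a_i x^i|
  set Q : ℕ → ℝ := fun k => ∑ j ∈ Finset.range k, |a (n - j) * x ^ (n - j)| with hQdef
  have hQnn : ∀ k, 0 ≤ Q k := fun k => Finset.sum_nonneg fun _ _ => abs_nonneg _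
  have hQA : ∀ k, k ≤ n + 1 → Q k ≤ A := by
    have hQn1 : Q (n + 1) = A := by
      rw [hAdef]
      simp only [hQdef]
      simpa using Finset.sum_range_reflect (fun j => |a j * x ^ j|) (n + 1)
    intro k hk
    calc Q k ≤ Q (n + 1) := by
          simp only [hQdef]
          exact Finset.sum_le_sum_of_subset_of_nonneg (Finset.range_subset_range.2 hk)
            (fun _ _ _ => abs_nonneg _)
      _ = A := hQn1
  have hQsucc : ∀ k, Q (k + 1) = Q k + |a (n - k) * x ^ (n - k)| := fun k => by
    simp only [hQdef]; exact Finset.sum_range_succ _ _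
  -- filtration facts
  have hFle : ∀ i, F i ≤ ‹MeasurableSpace Ω› := by
    intro i
    rw [hF i]
    exact iSup₂_le fun j _ => measurable_iff_comap_le.1 (hδm j)
  have hFmono : Monotone F := by
    intro i j hij
    rw [hF i, hF j]
    exact biSup_mono fun m hm => Finset.mem_Icc.2
      ⟨(Finset.mem_Icc.1 hm).1, le_trans (Finset.mem_Icc.1 hm).2 hij⟩
  have hδFm : ∀ j m, 1 ≤ j → j ≤ m → Measurable[F m] (δ j) := by
    intro j m h1 h2
    rw [measurable_iff_comap_le, hF m]
    exact le_biSup (fun j => MeasurableSpace.comap (δ j) Real.measurableSpace)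
      (Finset.mem_Icc.2 ⟨h1, h2⟩)
  -- measurability of rhat
  have hrm : ∀ k, k ≤ n → Measurable[F (2 * k)] (rhat (2 * k)) ∧
      (1 ≤ k → Measurable[F (2 * k - 1)] (rhat (2 * k - 1))) := by
    intro k
    induction k with
    | zero =>
      intro _
      refine ⟨?_, by omega⟩
      have h : rhat 0 = fun _ => a n := funext h0
      rw [show 2 * 0 = 0 from rfl, h]
      exact measurable_const
    | succ k ih =>
      intro hk
      have ihE := (ih (by omega)).1
      have hOdd : Measurable[F (2 * k + 1)] (rhat (2 * k + 1)) := by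
        have heq : rhat (2 * k + 1) = fun ω => rhat (2 * k) ω * x * (1 + δ (2 * k + 1) ω) := by
          funext ω
          have h := hodd (k + 1) (by omega) hk ω
          rw [show 2 * (k + 1) - 1 = 2 * k + 1 from by omega,
            show 2 * (k + 1) - 2 = 2 * k from by omega] at h
          exact h
        rw [heq]
        exact ((ihE.mono (hFmono (by omega)) le_rfl).mul measurable_const).mul
          (measurable_const.add (hδFm _ _ (by omega) le_rfl))
      constructor
      · have heq : rhat (2 * (k + 1)) =
            fun ω => (rhat (2 * k + 1) ω + a (n - (k + 1))) * (1 + δ (2 * (k + 1)) ω) := by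
          funext ω
          have h := heven (k + 1) (by omega) hk ω
          rw [show 2 * (k + 1) - 1 = 2 * k + 1 from by omega] at h
          exact h
        rw [heq]
        exact ((hOdd.mono (hFmono (by omega)) le_rfl).add measurable_const).mul
          (measurable_const.add (hδFm _ _ (by omega) le_rfl))
      · intro _
        rw [show 2 * (k + 1) - 1 = 2 * k + 1 from by omega]
        exact hOdd
  -- a.e. bound on all the relevant δ's
  have hgood : ∀ᵐ ω ∂μ, ∀ m ∈ Finset.Icc 1 (2 * n), |δ m ω| ≤ u :=
    ae_finset_forall _ fun m hm =>
      hδb m (Finset.mem_Icc.1 hm).1 (Finset.mem_Icc.1 hm).2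
  -- deterministic bounds on rhat on the good event
  have hbnd : ∀ ω, (∀ m ∈ Finset.Icc 1 (2 * n), |δ m ω| ≤ u) → ∀ k, k ≤ n →
      (|rhat (2 * k) ω| * |x| ^ (n - k) ≤ (1 + u) ^ (2 * k) * Q (k + 1)) ∧
      (1 ≤ k → |rhat (2 * k - 1) ω| * |x| ^ (n - k) ≤ (1 + u) ^ (2 * k - 1) * Q k) := by
    intro ω hω k
    induction k with
    | zero =>
      intro _
      refine ⟨?_, by omega⟩
      rw [show 2 * 0 = 0 from rfl, h0 ω]
      have hq1 : Q 1 = |a n * x ^ n| := by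
        simp only [hQdef]
        rw [Finset.sum_range_one]
        norm_num
      rw [hq1]
      simp [abs_mul, abs_pow]
    | succ k ih =>
      intro hk
      have ihE := (ih (by omega)).1
      have hδo : |δ (2 * k + 1) ω| ≤ u := hω _ (Finset.mem_Icc.2 (by omega))
      have hδe : |δ (2 * k + 2) ω| ≤ u := hω _ (Finset.mem_Icc.2 (by omega))
      have h1δo : |1 + δ (2 * k + 1) ω| ≤ 1 + u := by
        calc |1 + δ (2 * k + 1) ω| ≤ |(1:ℝ)| + |δ (2 * k + 1) ω| := abs_add_le _ _
          _ ≤ 1 + u := by rw [abs_one]; linarith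
      have h1δe : |1 + δ (2 * k + 2) ω| ≤ 1 + u := by
        calc |1 + δ (2 * k + 2) ω| ≤ |(1:ℝ)| + |δ (2 * k + 2) ω| := abs_add_le _ _
          _ ≤ 1 + u := by rw [abs_one]; linarith
      have ho : rhat (2 * k + 1) ω = rhat (2 * k) ω * x * (1 + δ (2 * k + 1) ω) := by
        have h := hodd (k + 1) (by omega) hk ω
        rw [show 2 * (k + 1) - 1 = 2 * k + 1 from by omega,
          show 2 * (k + 1) - 2 = 2 * k from by omega] at h
        exact h
      have he : rhat (2 * k + 2) ω =
          (rhat (2 * k + 1) ω + a (n - (k + 1))) * (1 + δ (2 * k + 2) ω) := by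
        have h := heven (k + 1) (by omega) hk ω
        rw [show 2 * (k + 1) - 1 = 2 * k + 1 from by omega,
          show 2 * (k + 1) = 2 * k + 2 from by omega] at h
        exact h
      have hodd_bd : |rhat (2 * k + 1) ω| * |x| ^ (n - (k + 1))
          ≤ (1 + u) ^ (2 * k + 1) * Q (k + 1) := by
        have e1 : |rhat (2 * k + 1) ω| * |x| ^ (n - (k + 1))
            = (|rhat (2 * k) ω| * |x| ^ (n - k)) * |1 + δ (2 * k + 1) ω| := by
          rw [ho, abs_mul, abs_mul,
            show n - k = (n - (k + 1)) + 1 from by omega, pow_succ]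
          ring
        rw [e1, pow_succ]
        have hnn : (0:ℝ) ≤ (1 + u) ^ (2 * k) * Q (k + 1) :=
          mul_nonneg (by positivity) (hQnn _)
        calc (|rhat (2 * k) ω| * |x| ^ (n - k)) * |1 + δ (2 * k + 1) ω|
            ≤ ((1 + u) ^ (2 * k) * Q (k + 1)) * (1 + u) :=
              mul_le_mul ihE h1δo (abs_nonneg _) hnn
          _ = (1 + u) ^ (2 * k) * (1 + u) * Q (k + 1) := by ring
      have heven_bd : |rhat (2 * k + 2) ω| * |x| ^ (n - (k + 1))
          ≤ (1 + u) ^ (2 * k + 2) * Q (k + 2) := by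
        have h3 : |rhat (2 * k + 1) ω + a (n - (k + 1))| * |1 + δ (2 * k + 2) ω|
            ≤ (|rhat (2 * k + 1) ω| + |a (n - (k + 1))|) * (1 + u) :=
          mul_le_mul (abs_add_le _ _) h1δe (abs_nonneg _) (by positivity)
        have e2 : |rhat (2 * k + 2) ω| * |x| ^ (n - (k + 1))
            ≤ (|rhat (2 * k + 1) ω| * |x| ^ (n - (k + 1))
                + |a (n - (k + 1)) * x ^ (n - (k + 1))|) * (1 + u) := by
          rw [he, abs_mul]
          calc |rhat (2 * k + 1) ω + a (n - (k + 1))| * |1 + δ (2 * k + 2) ω|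
              * |x| ^ (n - (k + 1))
              ≤ ((|rhat (2 * k + 1) ω| + |a (n - (k + 1))|) * (1 + u)) * |x| ^ (n - (k + 1)) :=
                mul_le_mul_of_nonneg_right h3 (by positivity)
            _ = (|rhat (2 * k + 1) ω| * |x| ^ (n - (k + 1))
                + |a (n - (k + 1))| * |x| ^ (n - (k + 1))) * (1 + u) := by ring
            _ = (|rhat (2 * k + 1) ω| * |x| ^ (n - (k + 1))
                + |a (n - (k + 1)) * x ^ (n - (k + 1))|) * (1 + u) := by
                rw [abs_mul, abs_pow]
        have habs_nn : (0:ℝ) ≤ |a (n - (k + 1)) * x ^ (n - (k + 1))| := abs_nonneg _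
        have hone : (1:ℝ) ≤ (1 + u) ^ (2 * k + 1) := honep _
        have e3 : (|rhat (2 * k + 1) ω| * |x| ^ (n - (k + 1))
              + |a (n - (k + 1)) * x ^ (n - (k + 1))|) * (1 + u)
            ≤ ((1 + u) ^ (2 * k + 1) * Q (k + 1)
              + (1 + u) ^ (2 * k + 1) * |a (n - (k + 1)) * x ^ (n - (k + 1))|) * (1 + u) := by
          have := hodd_bd
          nlinarith [mul_nonneg (sub_nonneg.2 hone) habs_nn]
        have e4 : ((1 + u) ^ (2 * k + 1) * Q (k + 1)
              + (1 + u) ^ (2 * k + 1) * |a (n - (k + 1)) * x ^ (n - (k + 1))|) * (1 + u)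
            = (1 + u) ^ (2 * k + 2) * Q (k + 2) := by
          rw [show Q (k + 2) = Q (k + 1) + |a (n - (k + 1)) * x ^ (n - (k + 1))| from
            hQsucc (k + 1), pow_succ]
          ring
        linarith [e2, e3]
      constructor
      · rw [show 2 * (k + 1) = 2 * k + 2 from by omega]
        exact heven_bd
      · intro _
        rw [show 2 * (k + 1) - 1 = 2 * k + 1 from by omega]
        exact hodd_bd
  -- the martingale increments
  set D : ℕ → Ω → ℝ := fun m ω =>
    (if m % 2 = 1 then rhat (m - 1) ω * x ^ (n - (m + 1) / 2 + 1)
     else (rhat (m - 1) ω + a (n - m / 2)) * x ^ (n - m / 2)) * δ m ω with hDdef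
  have hD_odd : ∀ k, 1 ≤ k →
      D (2 * k - 1) = fun ω => rhat (2 * k - 2) ω * x ^ (n - k + 1) * δ (2 * k - 1) ω := by
    intro k hk
    funext ω
    simp only [hDdef]
    rw [if_pos (show (2 * k - 1) % 2 = 1 by omega),
      show 2 * k - 1 - 1 = 2 * k - 2 from by omega,
      show (2 * k - 1 + 1) / 2 = k from by omega]
  have hD_even : ∀ k, 1 ≤ k →
      D (2 * k) = fun ω => (rhat (2 * k - 1) ω + a (n - k)) * x ^ (n - k) * δ (2 * k) ω := by
    intro k hk
    funext ω
    simp only [hDdef]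
    rw [if_neg (show ¬ (2 * k) % 2 = 1 by omega), show 2 * k / 2 = k from by omega]
  set cseq : ℕ → ℝ := fun m => u * (1 + u) ^ (m - 1) * A with hcdef
  have hcnn : ∀ m, 0 ≤ cseq m := fun m =>
    mul_nonneg (mul_nonneg hu.le (pow_nonneg hupos.le _)) hApos.le
  -- structure of the increments
  have hGfact : ∀ m ∈ Finset.Icc 1 (2 * n), ∃ G : Ω → ℝ,
      D m = G * δ m ∧ Measurable[F (m - 1)] G ∧
      (∀ᵐ ω ∂μ, |G ω| ≤ (1 + u) ^ (m - 1) * A) := by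
    intro m hm
    obtain ⟨hm1, hm2⟩ := Finset.mem_Icc.1 hm
    rcases Nat.even_or_odd m with ⟨k, hk⟩ | ⟨k, hk⟩
    · -- even : m = k + k = 2 k, 1 ≤ k ≤ n
      subst hk
      have hk1 : 1 ≤ k := by omega
      have hkn : k ≤ n := by omega
      refine ⟨fun ω => (rhat (2 * k - 1) ω + a (n - k)) * x ^ (n - k), ?_, ?_, ?_⟩
      · rw [show k + k = 2 * k from by omega, hD_even k hk1]
        rfl
      · rw [show k + k - 1 = 2 * k - 1 from by omega]
        exact (((hrm k hkn).2 hk1).add measurable_const).mul measurable_const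
      · filter_upwards [hgood] with ω hω
        have hb := (hbnd ω hω k hkn).2 hk1
        rw [show k + k - 1 = 2 * k - 1 from by omega]
        have hone : (1:ℝ) ≤ (1 + u) ^ (2 * k - 1) := honep _
        calc |(rhat (2 * k - 1) ω + a (n - k)) * x ^ (n - k)|
            ≤ (|rhat (2 * k - 1) ω| + |a (n - k)|) * |x| ^ (n - k) := by
              rw [abs_mul, abs_pow]
              exact mul_le_mul_of_nonneg_right (abs_add_le _ _) (by positivity)
          _ = |rhat (2 * k - 1) ω| * |x| ^ (n - k) + |a (n - k) * x ^ (n - k)| := by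
              rw [abs_mul, abs_pow]; ring
          _ ≤ (1 + u) ^ (2 * k - 1) * Q k + (1 + u) ^ (2 * k - 1) * |a (n - k) * x ^ (n - k)| := by
              nlinarith [mul_nonneg (sub_nonneg.2 hone) (abs_nonneg (a (n - k) * x ^ (n - k)))]
          _ = (1 + u) ^ (2 * k - 1) * Q (k + 1) := by rw [hQsucc k]; ring
          _ ≤ (1 + u) ^ (2 * k - 1) * A :=
              mul_le_mul_of_nonneg_left (hQA (k + 1) (by omega)) (by positivity)
    · -- odd : m = 2 k + 1, k + 1 ≤ n
      subst hk
      have hkn : k + 1 ≤ n := by omega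
      have hD1 : D (2 * k + 1) = fun ω => rhat (2 * k) ω * x ^ (n - k) * δ (2 * k + 1) ω := by
        have h := hD_odd (k + 1) (by omega)
        rw [show 2 * (k + 1) - 1 = 2 * k + 1 from by omega,
          show 2 * (k + 1) - 2 = 2 * k from by omega,
          show n - (k + 1) + 1 = n - k from by omega] at h
        exact h
      refine ⟨fun ω => rhat (2 * k) ω * x ^ (n - k), ?_, ?_, ?_⟩
      · rw [hD1]; rfl
      · rw [show 2 * k + 1 - 1 = 2 * k from by omega]
        exact ((hrm k (by omega)).1).mul measurable_const
      · filter_upwards [hgood] with ω hω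
        have hb := (hbnd ω hω k (by omega)).1
        rw [show 2 * k + 1 - 1 = 2 * k from by omega]
        calc |rhat (2 * k) ω * x ^ (n - k)| = |rhat (2 * k) ω| * |x| ^ (n - k) := by
              rw [abs_mul, abs_pow]
          _ ≤ (1 + u) ^ (2 * k) * Q (k + 1) := hb
          _ ≤ (1 + u) ^ (2 * k) * A :=
              mul_le_mul_of_nonneg_left (hQA (k + 1) (by omega)) (by positivity)
  -- derived hypotheses for the Azuma lemma
  have hDmeas : ∀ m ∈ Finset.Icc 1 (2 * n), Measurable[F m] (D m) := by
    intro m hm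
    obtain ⟨G, hDe, hGm, _⟩ := hGfact m hm
    rw [hDe]
    exact (hGm.mono (hFmono (by omega)) le_rfl).mul
      (hδFm m m (Finset.mem_Icc.1 hm).1 le_rfl)
  have hDbd : ∀ m ∈ Finset.Icc 1 (2 * n), ∀ᵐ ω ∂μ, |D m ω| ≤ cseq m := by
    intro m hm
    obtain ⟨G, hDe, _, hGbd⟩ := hGfact m hm
    filter_upwards [hGbd, hδb m (Finset.mem_Icc.1 hm).1 (Finset.mem_Icc.1 hm).2] with ω h1 h2
    have : D m ω = G ω * δ m ω := by rw [hDe]; rfl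
    rw [this, abs_mul]
    calc |G ω| * |δ m ω| ≤ ((1 + u) ^ (m - 1) * A) * u :=
          mul_le_mul h1 h2 (abs_nonneg _) (by positivity)
      _ = cseq m := by rw [hcdef]; ring
  have hδint : ∀ m ∈ Finset.Icc 1 (2 * n), Integrable (δ m) μ := by
    intro m hm
    refine Integrable.mono' (integrable_const u) (hδm m).aestronglyMeasurable ?_
    filter_upwards [hδb m (Finset.mem_Icc.1 hm).1 (Finset.mem_Icc.1 hm).2] with ω h
    simpa using h
  have hDcond : ∀ m ∈ Finset.Icc 1 (2 * n), μ[D m | F (m - 1)] =ᵐ[μ] fun _ => 0 := by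
    intro m hm
    obtain ⟨G, hDe, hGm, hGbd⟩ := hGfact m hm
    rw [hDe]
    have hpull := condExp_stronglyMeasurable_mul_of_bound (hFle (m - 1))
      hGm.stronglyMeasurable (hδint m hm) ((1 + u) ^ (m - 1) * A)
      (by filter_upwards [hGbd] with ω h; simpa using h)
    refine hpull.trans ?_
    filter_upwards [hmi m (Finset.mem_Icc.1 hm).1 (Finset.mem_Icc.1 hm).2] with ω h
    simp [h]
  -- telescoping identity
  have htel : ∀ ω, rhat (2 * n) ω - P = ∑ m ∈ Finset.Icc 1 (2 * n), D m ω := by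
    intro ω
    have key : ∀ k, k ≤ n →
        rhat (2 * k) ω * x ^ (n - k) - ∑ j ∈ Finset.range (k + 1), a (n - j) * x ^ (n - j)
          = ∑ m ∈ Finset.Icc 1 (2 * k), D m ω := by
      intro k
      induction k with
      | zero =>
        intro _
        rw [show 2 * 0 = 0 from rfl, show Finset.Icc 1 0 = ∅ from Finset.Icc_eq_empty (by omega)]
        simp [h0 ω]
      | succ k ihk =>
        intro hk
        have ih := ihk (by omega)
        have hsum : ∑ m ∈ Finset.Icc 1 (2 * (k + 1)), D m ω
            = ∑ m ∈ Finset.Icc 1 (2 * k), D m ω + D (2 * k + 1) ω + D (2 * k + 2) ω := by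
          rw [show 2 * (k + 1) = 2 * k + 1 + 1 from by ring,
            Finset.sum_Icc_succ_top (by omega), Finset.sum_Icc_succ_top (by omega)]
        have ho : rhat (2 * k + 1) ω = rhat (2 * k) ω * x * (1 + δ (2 * k + 1) ω) := by
          have h := hodd (k + 1) (by omega) hk ω
          rw [show 2 * (k + 1) - 1 = 2 * k + 1 from by omega,
            show 2 * (k + 1) - 2 = 2 * k from by omega] at h
          exact h
        have he : rhat (2 * (k + 1)) ω =
            (rhat (2 * k + 1) ω + a (n - (k + 1))) * (1 + δ (2 * k + 2) ω) := by
          have h := heven (k + 1) (by omega) hk ω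
          rw [show 2 * (k + 1) - 1 = 2 * k + 1 from by omega] at h
          rw [h, show 2 * (k + 1) = 2 * k + 2 from by omega]
        have hD1 : D (2 * k + 1) ω = rhat (2 * k) ω * x ^ (n - k) * δ (2 * k + 1) ω := by
          have h := hD_odd (k + 1) (by omega)
          rw [show 2 * (k + 1) - 1 = 2 * k + 1 from by omega,
            show 2 * (k + 1) - 2 = 2 * k from by omega,
            show n - (k + 1) + 1 = n - k from by omega] at h
          rw [h]
        have hD2 : D (2 * k + 2) ω =
            (rhat (2 * k + 1) ω + a (n - (k + 1))) * x ^ (n - (k + 1)) * δ (2 * k + 2) ω := by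
          have h := hD_even (k + 1) (by omega)
          rw [show 2 * (k + 1) - 1 = 2 * k + 1 from by omega,
            show 2 * (k + 1) = 2 * k + 2 from by omega] at h
          rw [h]
        have hxp : x ^ (n - k) = x ^ (n - (k + 1)) * x := by
          rw [show n - k = (n - (k + 1)) + 1 from by omega, pow_succ]
        rw [hsum, ← ih, he, Finset.sum_range_succ, hD1, hD2, ho, hxp]
        ring
    have hkey := key n le_rfl
    rw [Nat.sub_self, pow_zero, mul_one] at hkey
    have hrefl : ∑ j ∈ Finset.range (n + 1), a (n - j) * x ^ (n - j) = P := by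
      rw [hPdef]
      simpa using Finset.sum_range_reflect (fun j => a j * x ^ j) (n + 1)
    rw [hrefl] at hkey
    exact hkey
  -- variance proxy bound
  set V : ℝ := A ^ 2 * (u * γ) / 2 with hVdef
  have hVpos : 0 < V := by rw [hVdef]; positivity
  have hgeom : ∀ M : ℕ, 2 * u * (∑ i ∈ Finset.range M, ((1 + u) ^ 2) ^ i)
      ≤ (1 + u) ^ (2 * M) - 1 := by
    intro M
    induction M with
    | zero => simp
    | succ M ih =>
      rw [Finset.sum_range_succ, show 2 * (M + 1) = 2 * M + 2 from by ring, pow_add]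
      have hp : (0:ℝ) ≤ (1 + u) ^ (2 * M) := by positivity
      have he2 : ((1 + u) ^ 2) ^ M = (1 + u) ^ (2 * M) := by
        rw [← pow_mul]
      rw [he2]
      nlinarith [mul_nonneg hp (sq_nonneg u)]
  have hsum_c : ∑ m ∈ Finset.Icc 1 (2 * n), cseq m ^ 2 ≤ V := by
    have h1 : ∑ m ∈ Finset.Icc 1 (2 * n), cseq m ^ 2
        = ∑ i ∈ Finset.range (2 * n), cseq (1 + i) ^ 2 := by
      rw [← Finset.Ico_add_one_right_eq_Icc, Finset.sum_Ico_eq_sum_range]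
      simp
    have h2 : ∀ i : ℕ, cseq (1 + i) ^ 2 = u ^ 2 * A ^ 2 * ((1 + u) ^ 2) ^ i := by
      intro i
      rw [hcdef]
      simp only [show 1 + i - 1 = i from by omega]
      rw [show ((1 + u) ^ 2) ^ i = ((1 + u) ^ i) ^ 2 from by
        rw [← pow_mul, ← pow_mul, Nat.mul_comm]]
      ring
    have h3 : ∑ i ∈ Finset.range (2 * n), cseq (1 + i) ^ 2
        = u ^ 2 * A ^ 2 * ∑ i ∈ Finset.range (2 * n), ((1 + u) ^ 2) ^ i := by
      rw [Finset.mul_sum]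
      exact Finset.sum_congr rfl fun i _ => h2 i
    have h4 := hgeom (2 * n)
    rw [show 2 * (2 * n) = 4 * n from by ring] at h4
    have h5 : (1 + u) ^ (4 * n) - 1 = γ := by rw [hγdef]
    rw [h5] at h4
    have hsge : (0:ℝ) ≤ ∑ i ∈ Finset.range (2 * n), ((1 + u) ^ 2) ^ i :=
      Finset.sum_nonneg fun i _ => by positivity
    rw [h1, h3, hVdef]
    set S2 : ℝ := ∑ i ∈ Finset.range (2 * n), ((1 + u) ^ 2) ^ i with hS2def
    calc u ^ 2 * A ^ 2 * S2 = (u * A ^ 2 / 2) * (2 * u * S2) := by ring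
      _ ≤ (u * A ^ 2 / 2) * γ := mul_le_mul_of_nonneg_left h4 (by positivity)
      _ = A ^ 2 * (u * γ) / 2 := by ring
  -- the deviation threshold
  set t : ℝ := A * Real.sqrt (u * γ) * Real.sqrt L with htdef
  have htpos : 0 < t := by
    rw [htdef]
    have h1 : 0 < Real.sqrt (u * γ) := Real.sqrt_pos.2 (by positivity)
    have h2 : 0 < Real.sqrt L := Real.sqrt_pos.2 hLpos
    positivity
  have hexp_eq : Real.exp (-(t ^ 2) / (2 * V)) = lam / 2 := by
    have ht2 : t ^ 2 = A ^ 2 * (u * γ) * L := by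
      rw [htdef, mul_pow, mul_pow, Real.sq_sqrt (by positivity : (0:ℝ) ≤ u * γ),
        Real.sq_sqrt hLpos.le]
    have h2V : 2 * V = A ^ 2 * (u * γ) := by rw [hVdef]; ring
    have hAuγ : (0:ℝ) < A ^ 2 * (u * γ) := by positivity
    have harg : -(t ^ 2) / (2 * V) = -L := by
      rw [ht2, h2V]
      field_simp
    rw [harg, Real.exp_neg, hLdef, Real.exp_log (by positivity), inv_div]
  -- tail bounds
  have hup : μ {ω | t ≤ ∑ m ∈ Finset.Icc 1 (2 * n), D m ω} ≤ ENNReal.ofReal (lam / 2) := by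
    have := azuma_tail F hFle hFmono D cseq hcnn (2 * n) hDmeas hDbd hDcond t V htpos hVpos hsum_c
    rwa [hexp_eq] at this
  have hdn : μ {ω | t ≤ -(∑ m ∈ Finset.Icc 1 (2 * n), D m ω)} ≤ ENNReal.ofReal (lam / 2) := by
    have hneg := azuma_tail F hFle hFmono (fun m ω => -(D m ω)) cseq hcnn (2 * n)
      (fun m hm => (hDmeas m hm).neg)
      (fun m hm => by filter_upwards [hDbd m hm] with ω h; simpa using h)
      (fun m hm => by
        have h1 : μ[-(D m) | F (m - 1)] =ᵐ[μ] -(μ[D m | F (m - 1)]) := condExp_neg (D m) _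
        refine h1.trans ?_
        filter_upwards [hDcond m hm] with ω h
        simp [h])
      t V htpos hVpos hsum_c
    rw [hexp_eq] at hneg
    have hseteq : {ω | t ≤ ∑ m ∈ Finset.Icc 1 (2 * n), -(D m ω)}
        = {ω | t ≤ -(∑ m ∈ Finset.Icc 1 (2 * n), D m ω)} := by
      ext ω
      simp [Finset.sum_neg_distrib]
    rwa [hseteq] at hneg
  -- assembling
  have hSm : Measurable (fun ω => rhat (2 * n) ω - P) :=
    ((hrm n le_rfl).1.mono (hFle (2 * n)) le_rfl).sub measurable_const
  have hTmeas : MeasurableSet {ω | t < |rhat (2 * n) ω - P|} :=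
    measurableSet_lt measurable_const hSm.abs
  have hbad : μ {ω | t < |rhat (2 * n) ω - P|} ≤ ENNReal.ofReal lam := by
    have hsub : {ω | t < |rhat (2 * n) ω - P|} ⊆
        {ω | t ≤ ∑ m ∈ Finset.Icc 1 (2 * n), D m ω}
          ∪ {ω | t ≤ -(∑ m ∈ Finset.Icc 1 (2 * n), D m ω)} := by
      intro ω hω
      simp only [Set.mem_setOf_eq, Set.mem_union]
      rw [Set.mem_setOf_eq, htel ω] at hω
      rcases abs_cases (∑ m ∈ Finset.Icc 1 (2 * n), D m ω) with ⟨he, _⟩ | ⟨he, _⟩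
      · left; rw [he] at hω; linarith
      · right; rw [he] at hω; linarith
    calc μ {ω | t < |rhat (2 * n) ω - P|}
        ≤ μ ({ω | t ≤ ∑ m ∈ Finset.Icc 1 (2 * n), D m ω}
          ∪ {ω | t ≤ -(∑ m ∈ Finset.Icc 1 (2 * n), D m ω)}) := measure_mono hsub
      _ ≤ μ {ω | t ≤ ∑ m ∈ Finset.Icc 1 (2 * n), D m ω}
          + μ {ω | t ≤ -(∑ m ∈ Finset.Icc 1 (2 * n), D m ω)} := measure_union_le _ _
      _ ≤ ENNReal.ofReal (lam / 2) + ENNReal.ofReal (lam / 2) := add_le_add hup hdn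
      _ = ENNReal.ofReal lam := by
          rw [← ENNReal.ofReal_add (by linarith) (by linarith)]
          norm_num
  have hsub2 : {ω | t < |rhat (2 * n) ω - P|}ᶜ ⊆
      {ω | |rhat (2 * n) ω - P| / |P|
        ≤ A / |P| * Real.sqrt (u * γ) * Real.sqrt L} := by
    intro ω hω
    simp only [Set.mem_compl_iff, Set.mem_setOf_eq, not_lt] at hω
    simp only [Set.mem_setOf_eq]
    have h1 : |rhat (2 * n) ω - P| / |P| ≤ t / |P| := by
      gcongr
    have h2 : t / |P| = A / |P| * Real.sqrt (u * γ) * Real.sqrt L := by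
      rw [htdef]; ring
    exact le_of_le_of_eq h1 h2
  calc ENNReal.ofReal (1 - lam) = 1 - ENNReal.ofReal lam := by
        rw [ENNReal.ofReal_sub 1 hlam0.le, ENNReal.ofReal_one]
    _ ≤ 1 - μ {ω | t < |rhat (2 * n) ω - P|} := tsub_le_tsub_left hbad 1
    _ = μ ({ω | t < |rhat (2 * n) ω - P|}ᶜ) := (prob_compl_eq_one_sub hTmeas).symm
    _ ≤ μ {ω | |rhat (2 * n) ω - P| / |P|
          ≤ A / |P| * Real.sqrt (u * γ) * Real.sqrt L} := measure_mono hsub2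
end
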